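/- arXiv:2309.11175 — 9 statements merged into one kernel-verified Lean document; each statement's English description precedes it below -/
import Mathlib

section
/- Assume the SpaceSaving guarantees with table size K on a stream of length N with sorted frequency function f. Then for every integer u with 0 ≤ u < K/2 one has c_K ≤ F^{res(u)}/(K − 2u). Consequently c_K ≤ min over all integers 0 ≤ u < K/2 of F^{res(u)}/(K − 2u). -/
/-!
Let `A` be the counters that monitor one of the `u` most frequent items `1, …, u`; by injectivity
of `σ` there are at most `u` of them. Each of the top `u` frequencies is bounded either by its own counter
in `A` or, if the item is unmonitored, by `c K`; every counter outside `A` is at least `c K`.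
Comparing the two expressions of `N` then gives `K · c K ≤ 2u · c K + F^{res(u)}`.
-/

open Finset

namespace SpaceSaving

variable {ι κ : Type*} [DecidableEq ι] {S : Finset κ} {T H : Finset ι}
  {f : ι → ℕ} {c : κ → ℕ} {σ : κ → ι} {m : ℕ}

theorem card_filter_mem_le (hσ : Set.InjOn σ S) : #{j ∈ S | σ j ∈ H} ≤ #H :=
  card_le_card_of_injOn σ (fun _ hj => (mem_filter.mp hj).2) (hσ.mono (filter_subset _ _))

theorem sum_le_sum_filter_mem_add (hH : H ⊆ T) (hσ : Set.InjOn σ S)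
    (hup : ∀ j ∈ S, f (σ j) ≤ c j) (hout : ∀ i ∈ T, (∀ j ∈ S, σ j ≠ i) → f i ≤ m) :
    ∑ i ∈ H, f i ≤ ∑ j ∈ S with σ j ∈ H, c j + #H * m := by
  set A := {j ∈ S | σ j ∈ H}
  have hAS : A ⊆ S := filter_subset _ _
  have himage : A.image σ ⊆ H := image_subset_iff.mpr fun _ hj => (mem_filter.mp hj).2
  have hmonitored : ∑ i ∈ A.image σ, f i ≤ ∑ j ∈ A, c j := by
    rw [sum_image (hσ.mono hAS)]
    exact sum_le_sum fun j hj => hup j (hAS hj)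
  have hunmonitored : ∑ i ∈ H \ A.image σ, f i ≤ #H * m := by
    calc ∑ i ∈ H \ A.image σ, f i ≤ #(H \ A.image σ) • m := by
          refine sum_le_card_nsmul _ _ _ fun i hi => ?_
          obtain ⟨hiH, hiA⟩ := mem_sdiff.mp hi
          refine hout i (hH hiH) fun j hj hji => hiA ?_
          exact mem_image.mpr ⟨j, mem_filter.mpr ⟨hj, hji ▸ hiH⟩, hji⟩
      _ ≤ #H * m := Nat.mul_le_mul_right m (card_le_card sdiff_subset)
  rw [← sum_sdiff himage]
  omega

theorem card_mul_le_two_card_mul_add_sum_sdiff (hH : H ⊆ T) (hσ : Set.InjOn σ S)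
    (hsum : ∑ j ∈ S, c j = ∑ i ∈ T, f i) (hmin : ∀ j ∈ S, m ≤ c j)
    (hup : ∀ j ∈ S, f (σ j) ≤ c j) (hout : ∀ i ∈ T, (∀ j ∈ S, σ j ≠ i) → f i ≤ m) :
    #S * m ≤ 2 * #H * m + ∑ i ∈ T \ H, f i := by
  have hA : #{j ∈ S | σ j ∈ H} ≤ #H := card_filter_mem_le hσ
  have hhead := sum_le_sum_filter_mem_add hH hσ hup hout
  have hrest : #{j ∈ S | σ j ∉ H} * m ≤ ∑ j ∈ S with σ j ∉ H, c j :=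
    card_nsmul_le_sum _ _ _ fun j hj => hmin j (mem_filter.mp hj).1
  have hsplitS := sum_filter_add_sum_filter_not S (σ · ∈ H) c
  have hsplitT := sum_sdiff (f := f) hH
  have hcardS := card_filter_add_card_filter_not (s := S) (σ · ∈ H)
  have hAm := Nat.mul_le_mul_right m hA
  rw [← hcardS, add_mul]
  linarith

end SpaceSaving

theorem stmt2_general
    (n K N : ℕ) (f c σ : ℕ → ℕ)
    (hfsum : ∑ i ∈ Finset.Icc 1 n, f i = N)
    (hcmono : ∀ i ∈ Finset.Icc 1 K, ∀ j ∈ Finset.Icc 1 K, i ≤ j → c j ≤ c i)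
    (hcsum : ∑ j ∈ Finset.Icc 1 K, c j = N)
    (hσinj : ∀ j ∈ Finset.Icc 1 K, ∀ j' ∈ Finset.Icc 1 K, σ j = σ j' → j = j')
    (hup : ∀ j ∈ Finset.Icc 1 K, f (σ j) ≤ c j)
    (hout : ∀ i ∈ Finset.Icc 1 n, (∀ j ∈ Finset.Icc 1 K, σ j ≠ i) → f i ≤ c K)
    :
    ∀ u : ℕ, 2 * u < K →
      (c K : ℝ) ≤ (∑ i ∈ Finset.Icc (u + 1) n, (f i : ℝ)) / ((K : ℝ) - 2 * u) := by
  intro u hu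
  set H : Finset ℕ := {i ∈ Icc 1 n | i ≤ u}
  have hHu : #H ≤ u := by
    simpa using card_le_card (t := Icc 1 u) fun i hi => by simp_all [H]
  have hresidual : Icc 1 n \ H = Icc (u + 1) n := by
    ext i; simp only [H, mem_sdiff, mem_filter, mem_Icc]; omega
  have hmin : ∀ j ∈ Icc 1 K, c K ≤ c j := fun j hj =>
    hcmono j hj K (right_mem_Icc.mpr (by omega)) (mem_Icc.mp hj).2
  have key := SpaceSaving.card_mul_le_two_card_mul_add_sum_sdiff (H := H) (filter_subset _ _)
    (fun j hj j' hj' h => hσinj j hj j' hj' h) (hcsum.trans hfsum.symm) hmin hup hout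
  rw [Nat.card_Icc, Nat.add_sub_cancel, hresidual] at key
  have hbound : K * c K ≤ 2 * u * c K + ∑ i ∈ Icc (u + 1) n, f i :=
    key.trans (by gcongr)
  rw [le_div_iff₀ (sub_pos.mpr (by exact_mod_cast hu))]
  have := (Nat.cast_le (α := ℝ)).mpr hbound
  push_cast at this
  linarith

/-- tight analysis of SpaceSaving: under the SpaceSaving
guarantees with table size `K`, for every integer `u` with `0 ≤ u < K/2`,
`c K ≤ F^{res(u)} / (K - 2u)`, where `F^{res(u)} = ∑_{i=u+1}^n f i`.
(Hence `c K` is at most the minimum of these bounds over all such `u`.) -/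
theorem stmt2
    (n K N : ℕ) (f c σ : ℕ → ℕ)
    (hfmono : ∀ i ∈ Finset.Icc 1 n, ∀ j ∈ Finset.Icc 1 n, i ≤ j → f j ≤ f i)
    (hfsum : ∑ i ∈ Finset.Icc 1 n, f i = N)
    (hcmono : ∀ i ∈ Finset.Icc 1 K, ∀ j ∈ Finset.Icc 1 K, i ≤ j → c j ≤ c i)
    (hcsum : ∑ j ∈ Finset.Icc 1 K, c j = N)
    (hσmem : ∀ j ∈ Finset.Icc 1 K, σ j ∈ Finset.Icc 1 n)
    (hσinj : ∀ j ∈ Finset.Icc 1 K, ∀ j' ∈ Finset.Icc 1 K, σ j = σ j' → j = j')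
    (hlow : ∀ j ∈ Finset.Icc 1 K, c j ≤ f (σ j) + c K)
    (hup : ∀ j ∈ Finset.Icc 1 K, f (σ j) ≤ c j)
    (hout : ∀ i ∈ Finset.Icc 1 n, (∀ j ∈ Finset.Icc 1 K, σ j ≠ i) → f i ≤ c K)
    :
    ∀ u : ℕ, 2 * u < K →
      (c K : ℝ) ≤ (∑ i ∈ Finset.Icc (u + 1) n, (f i : ℝ)) / ((K : ℝ) - 2 * u) :=
  stmt2_general n K N f c σ hfsum hcmono hcsum hσinj hup hout
end

section
/- Assume the SpaceSaving guarantees with table size K on a stream of length N with sorted frequency function f, where K ≤ n. Then: (i) c_K ≤ N/K; (ii) f(i) ≤ c_K for every i with K < i ≤ n; (iii) for every i ≤ K, f(i) ≤ c_i ≤ f(i) + c_K, so in particular |f(i) − c_i| ≤ c_K. -/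
/-!
(i) is averaging: the smallest of the `K` counters is at most their mean `N / K`.
The remaining bounds are pigeonhole arguments. An item whose frequency exceeds `c_K` must be
monitored, and an injective `σ` cannot squeeze `i` indices into fewer than `i` slots: among
`1, …, i` with `i > K` some item is unmonitored; if `f i > c_i` then the items `1, …, i` would all be
monitored by the counters `1, …, i - 1`; and the `i` counters `1, …, i` monitor some item of rank
at least `i`.
-/

open Finset

theorem mul_le_sum_Icc_of_antitoneOn {K : ℕ} {c : ℕ → ℕ}
    (hc : AntitoneOn c (Icc 1 K : Set ℕ)) : K * c K ≤ ∑ j ∈ Icc 1 K, c j := by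
  simpa using card_nsmul_le_sum (Icc 1 K) c (c K) fun j hj =>
    hc hj (mem_Icc.2 ⟨(mem_Icc.1 hj).1.trans (mem_Icc.1 hj).2, le_rfl⟩) (mem_Icc.1 hj).2

theorem exists_mem_Icc_le_of_injOn {σ : ℕ → ℕ} {i : ℕ} (hi : 1 ≤ i)
    (hpos : ∀ j ∈ Icc 1 i, 0 < σ j) (hinj : Set.InjOn σ (Icc 1 i : Set ℕ)) :
    ∃ j ∈ Icc 1 i, i ≤ σ j := by
  by_contra! h
  have hmaps : ∀ j ∈ Icc 1 i, σ j ∈ Icc 1 (i - 1) := fun j hj =>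
    mem_Icc.2 ⟨hpos j hj, Nat.le_sub_one_of_lt (h j hj)⟩
  have := card_le_card_of_injOn σ hmaps hinj
  simp only [Nat.card_Icc] at this
  omega

/-- `σ j` is the rank, in the sorted frequencies `f`, of the item monitored by counter `j`. -/
structure SpaceSavingGuarantees (n K : ℕ) (f c σ : ℕ → ℕ) : Prop where
  antitoneOn_f : AntitoneOn f (Icc 1 n : Set ℕ)
  antitoneOn_c : AntitoneOn c (Icc 1 K : Set ℕ)
  mapsTo : Set.MapsTo σ (Icc 1 K : Set ℕ) (Icc 1 n : Set ℕ)
  injOn : Set.InjOn σ (Icc 1 K : Set ℕ)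
  le_f_add : ∀ j ∈ Icc 1 K, c j ≤ f (σ j) + c K
  f_le : ∀ j ∈ Icc 1 K, f (σ j) ≤ c j
  f_le_of_unmonitored : ∀ i ∈ Icc 1 n, (∀ j ∈ Icc 1 K, σ j ≠ i) → f i ≤ c K

namespace SpaceSavingGuarantees

variable {n K : ℕ} {f c σ : ℕ → ℕ}

theorem exists_eq_of_lt_f (h : SpaceSavingGuarantees n K f c σ) {m : ℕ} (hm : m ∈ Icc 1 n)
    (hlt : c K < f m) : ∃ j ∈ Icc 1 K, σ j = m := by
  by_contra! hne
  exact hlt.not_ge (h.f_le_of_unmonitored m hm hne)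

theorem f_le_of_lt (h : SpaceSavingGuarantees n K f c σ) {i : ℕ} (hKi : K < i) (hin : i ≤ n) :
    f i ≤ c K := by
  have hcard : #((Icc 1 K).image σ) < #(Icc 1 i) := by
    simpa using card_image_le.trans_lt (by simpa using hKi)
  obtain ⟨m, hm, hmσ⟩ := exists_mem_notMem_of_card_lt_card hcard
  have hmn : m ∈ Icc 1 n := mem_Icc.2 ⟨(mem_Icc.1 hm).1, (mem_Icc.1 hm).2.trans hin⟩
  have hunmonitored : ∀ j ∈ Icc 1 K, σ j ≠ m := fun j hj hjm => hmσ (mem_image.2 ⟨j, hj, hjm⟩)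
  calc f i ≤ f m := h.antitoneOn_f hmn (mem_Icc.2 ⟨(mem_Icc.1 hmn).1.trans (mem_Icc.1 hm).2, hin⟩)
        (mem_Icc.1 hm).2
    _ ≤ c K := h.f_le_of_unmonitored m hmn hunmonitored

theorem f_le_c (h : SpaceSavingGuarantees n K f c σ) (hKn : K ≤ n) {i : ℕ} (hi : i ∈ Icc 1 K) :
    f i ≤ c i := by
  obtain ⟨h1i, hiK⟩ := mem_Icc.1 hi
  have hK : K ∈ Icc 1 K := mem_Icc.2 ⟨h1i.trans hiK, le_rfl⟩
  have hin : i ∈ Icc 1 n := mem_Icc.2 ⟨h1i, hiK.trans hKn⟩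
  by_contra! hlt
  -- every item of rank at most `i` is then monitored by a counter larger than `c i`
  have hcover : Icc 1 i ⊆ (Icc 1 (i - 1)).image σ := by
    intro m hm
    have hmn : m ∈ Icc 1 n := mem_Icc.2 ⟨(mem_Icc.1 hm).1, (mem_Icc.1 hm).2.trans (hiK.trans hKn)⟩
    have hfm : f i ≤ f m := h.antitoneOn_f hmn hin (mem_Icc.1 hm).2
    obtain ⟨j, hj, rfl⟩ := h.exists_eq_of_lt_f hmn
      ((h.antitoneOn_c hi hK hiK).trans_lt (hlt.trans_le hfm))
    have hji : j < i := by
      by_contra! hij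
      exact (hlt.trans_le (hfm.trans (h.f_le j hj))).not_ge (h.antitoneOn_c hi hj hij)
    exact mem_image.2 ⟨j, mem_Icc.2 ⟨(mem_Icc.1 hj).1, Nat.le_sub_one_of_lt hji⟩, rfl⟩
  have := (card_le_card hcover).trans card_image_le
  simp only [Nat.card_Icc] at this
  omega

theorem c_le_f_add (h : SpaceSavingGuarantees n K f c σ) (hKn : K ≤ n) {i : ℕ}
    (hi : i ∈ Icc 1 K) : c i ≤ f i + c K := by
  have hsub : Icc 1 i ⊆ Icc 1 K := Icc_subset_Icc le_rfl (mem_Icc.1 hi).2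
  obtain ⟨j, hj, hij⟩ := exists_mem_Icc_le_of_injOn (mem_Icc.1 hi).1
    (fun j hj => (mem_Icc.1 (h.mapsTo (hsub hj))).1) (h.injOn.mono (coe_subset.2 hsub))
  have hin : i ∈ Icc 1 n := mem_Icc.2 ⟨(mem_Icc.1 hi).1, (mem_Icc.1 hi).2.trans hKn⟩
  calc c i ≤ c j := h.antitoneOn_c (hsub hj) hi (mem_Icc.1 hj).2
    _ ≤ f (σ j) + c K := h.le_f_add j (hsub hj)
    _ ≤ f i + c K := Nat.add_le_add_right (h.antitoneOn_f hin (h.mapsTo (hsub hj)) hij) _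

end SpaceSavingGuarantees

theorem stmt3_general
    (n K N : ℕ) (f c σ : ℕ → ℕ)
    (hfmono : ∀ i ∈ Finset.Icc 1 n, ∀ j ∈ Finset.Icc 1 n, i ≤ j → f j ≤ f i)
    (hcmono : ∀ i ∈ Finset.Icc 1 K, ∀ j ∈ Finset.Icc 1 K, i ≤ j → c j ≤ c i)
    (hcsum : ∑ j ∈ Finset.Icc 1 K, c j = N)
    (hσmem : ∀ j ∈ Finset.Icc 1 K, σ j ∈ Finset.Icc 1 n)
    (hσinj : ∀ j ∈ Finset.Icc 1 K, ∀ j' ∈ Finset.Icc 1 K, σ j = σ j' → j = j')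
    (hlow : ∀ j ∈ Finset.Icc 1 K, c j ≤ f (σ j) + c K)
    (hup : ∀ j ∈ Finset.Icc 1 K, f (σ j) ≤ c j)
    (hout : ∀ i ∈ Finset.Icc 1 n, (∀ j ∈ Finset.Icc 1 K, σ j ≠ i) → f i ≤ c K)
    (hK1 : 1 ≤ K) (hKn : K ≤ n) :
    ((c K : ℝ) ≤ (N : ℝ) / K) ∧
    (∀ i : ℕ, K < i → i ≤ n → f i ≤ c K) ∧
    (∀ i : ℕ, 1 ≤ i → i ≤ K →
      f i ≤ c i ∧ c i ≤ f i + c K ∧ |(f i : ℝ) - (c i : ℝ)| ≤ (c K : ℝ)) := by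
  have h : SpaceSavingGuarantees n K f c σ := ⟨hfmono, hcmono, hσmem, hσinj, hlow, hup, hout⟩
  refine ⟨?_, fun i hKi hin => h.f_le_of_lt hKi hin, fun i h1i hiK => ?_⟩
  · have hmean : ((K * c K : ℕ) : ℝ) ≤ N := by
      exact_mod_cast hcsum ▸ mul_le_sum_Icc_of_antitoneOn hcmono
    rw [le_div_iff₀ (by exact_mod_cast hK1)]
    push_cast at hmean
    linarith
  · have hi : i ∈ Icc 1 K := mem_Icc.2 ⟨h1i, hiK⟩
    have hle : f i ≤ c i := h.f_le_c hKn hi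
    have hge : c i ≤ f i + c K := h.c_le_f_add hKn hi
    refine ⟨hle, hge, abs_le.2 ⟨?_, ?_⟩⟩
    · have : (c i : ℝ) ≤ f i + c K := by exact_mod_cast hge
      linarith
    · have : (f i : ℝ) ≤ c i := by exact_mod_cast hle
      linarith [(c K).cast_nonneg (α := ℝ)]

/-- under the SpaceSaving guarantees with table size `K ≤ n`:
(i) `c K ≤ N / K`; (ii) `f i ≤ c K` for every `K < i ≤ n`;
(iii) `f i ≤ c i ≤ f i + c K` for every `i ≤ K` (so `|f i - c i| ≤ c K`). -/
theorem stmt3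
    (n K N : ℕ) (f c σ : ℕ → ℕ)
    (hfmono : ∀ i ∈ Finset.Icc 1 n, ∀ j ∈ Finset.Icc 1 n, i ≤ j → f j ≤ f i)
    (hfsum : ∑ i ∈ Finset.Icc 1 n, f i = N)
    (hcmono : ∀ i ∈ Finset.Icc 1 K, ∀ j ∈ Finset.Icc 1 K, i ≤ j → c j ≤ c i)
    (hcsum : ∑ j ∈ Finset.Icc 1 K, c j = N)
    (hσmem : ∀ j ∈ Finset.Icc 1 K, σ j ∈ Finset.Icc 1 n)
    (hσinj : ∀ j ∈ Finset.Icc 1 K, ∀ j' ∈ Finset.Icc 1 K, σ j = σ j' → j = j')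
    (hlow : ∀ j ∈ Finset.Icc 1 K, c j ≤ f (σ j) + c K)
    (hup : ∀ j ∈ Finset.Icc 1 K, f (σ j) ≤ c j)
    (hout : ∀ i ∈ Finset.Icc 1 n, (∀ j ∈ Finset.Icc 1 K, σ j ≠ i) → f i ≤ c K)
    (hK1 : 1 ≤ K) (hKn : K ≤ n) :
    ((c K : ℝ) ≤ (N : ℝ) / K) ∧
    (∀ i : ℕ, K < i → i ≤ n → f i ≤ c K) ∧
    (∀ i : ℕ, 1 ≤ i → i ≤ K →
      f i ≤ c i ∧ c i ≤ f i + c K ∧ |(f i : ℝ) - (c i : ℝ)| ≤ (c K : ℝ)) :=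
  stmt3_general n K N f c σ hfmono hcmono hcsum hσmem hσinj hlow hup hout hK1 hKn
end

section
/- (Exact Top-k result.) Assume the SpaceSaving guarantees with table size K on a stream of length N with sorted frequency function f. Let k < K ≤ n and suppose c_K < f(k) − f(k+1). Then the k table positions with the largest counters hold exactly the k most frequent elements: {σ(1), σ(2), …, σ(k)} = {1, 2, …, k}. -/
/-!
An element whose frequency exceeds the minimal counter `c K` must be monitored, and since every
counter overestimates its element's frequency by at most `c K`, the counters of any two monitored
elements whose frequencies differ by more than `c K` are ordered like those frequencies. The gap
`c K < f k - f (k+1)` therefore puts all of `1, …, k` into the table, in positions preceding every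
position holding some `i > k`; being `k` positions, they are exactly the first `k`.
-/

open Finset

theorem image_Icc_card_eq_of_forall_lt {α : Type*} [DecidableEq α] {σ : ℕ → α} {K : ℕ}
    {S : Finset α} (hinj : Set.InjOn σ (Icc 1 K)) (hcover : S ⊆ (Icc 1 K).image σ)
    (hbefore : ∀ j ∈ Icc 1 K, ∀ j' ∈ Icc 1 K, σ j ∈ S → σ j' ∉ S → j < j') :
    (Icc 1 #S).image σ = S := by
  have hSK : #S ≤ K := by
    simpa using (card_le_card hcover).trans card_image_le
  have hmaps : ∀ j ∈ Icc 1 #S, σ j ∈ S := by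
    intro j hj
    by_contra hjS
    obtain ⟨hj1, hjS'⟩ := mem_Icc.mp hj
    have hjK : j ∈ Icc 1 K := mem_Icc.mpr ⟨hj1, hjS'.trans hSK⟩
    have hcover' : S ⊆ (Icc 1 (j - 1)).image σ := by
      intro i hi
      obtain ⟨j', hj', rfl⟩ := mem_image.mp (hcover hi)
      have hlt := hbefore j' hj' j hjK hi hjS
      exact mem_image_of_mem σ (mem_Icc.mpr ⟨(mem_Icc.mp hj').1, by omega⟩)
    have := (card_le_card hcover').trans card_image_le
    simp only [Nat.card_Icc] at this
    omega
  refine eq_of_subset_of_card_le (image_subset_iff.mpr hmaps) ?_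
  rw [card_image_of_injOn (hinj.mono (coe_subset.mpr (Icc_subset_Icc_right hSK))), Nat.card_Icc]
  omega

section SpaceSaving

variable {n K k : ℕ} {f c σ : ℕ → ℕ}

theorem exists_eq_of_lt_freq (hfmono : AntitoneOn f (Icc 1 n))
    (hout : ∀ i ∈ Icc 1 n, (∀ j ∈ Icc 1 K, σ j ≠ i) → f i ≤ c K) (hkn : k ≤ n)
    (hk : c K < f k) {i : ℕ} (hi : i ∈ Icc 1 k) : ∃ j ∈ Icc 1 K, σ j = i := by
  obtain ⟨hi1, hik⟩ := mem_Icc.mp hi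
  have hin : i ∈ Icc 1 n := mem_Icc.mpr ⟨hi1, hik.trans hkn⟩
  have hfi : f k ≤ f i := hfmono hin (mem_Icc.mpr ⟨hi1.trans hik, hkn⟩) hik
  by_contra! hnot
  exact absurd (hout i hin hnot) (by omega)

theorem lt_of_freq_add_lt_freq (hcmono : AntitoneOn c (Icc 1 K))
    (hup : ∀ j ∈ Icc 1 K, f (σ j) ≤ c j) (hlow : ∀ j ∈ Icc 1 K, c j ≤ f (σ j) + c K)
    {j j' : ℕ} (hj : j ∈ Icc 1 K) (hj' : j' ∈ Icc 1 K) (hlt : f (σ j') + c K < f (σ j)) :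
    j < j' := by
  by_contra! hle
  have := hcmono hj' hj hle
  have := hup j hj
  have := hlow j' hj'
  omega

end SpaceSaving

theorem stmt4_general
    (n K : ℕ) (f c σ : ℕ → ℕ)
    (hfmono : ∀ i ∈ Finset.Icc 1 n, ∀ j ∈ Finset.Icc 1 n, i ≤ j → f j ≤ f i)
    (hcmono : ∀ i ∈ Finset.Icc 1 K, ∀ j ∈ Finset.Icc 1 K, i ≤ j → c j ≤ c i)
    (hσmem : ∀ j ∈ Finset.Icc 1 K, σ j ∈ Finset.Icc 1 n)
    (hσinj : ∀ j ∈ Finset.Icc 1 K, ∀ j' ∈ Finset.Icc 1 K, σ j = σ j' → j = j')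
    (hlow : ∀ j ∈ Finset.Icc 1 K, c j ≤ f (σ j) + c K)
    (hup : ∀ j ∈ Finset.Icc 1 K, f (σ j) ≤ c j)
    (hout : ∀ i ∈ Finset.Icc 1 n, (∀ j ∈ Finset.Icc 1 K, σ j ≠ i) → f i ≤ c K)
    (k : ℕ) (hkK : k < K) (hKn : K ≤ n)
    (hgap : (c K : ℝ) < (f k : ℝ) - (f (k + 1) : ℝ)) :
    Finset.image σ (Finset.Icc 1 k) = Finset.Icc 1 k := by
  have hf : AntitoneOn f (Icc 1 n) := fun i hi j hj => hfmono i hi j hj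
  have hgap' : f (k + 1) + c K < f k := by
    exact_mod_cast (by linarith : (f (k + 1) + c K : ℝ) < f k)
  have hcover : Icc 1 k ⊆ (Icc 1 K).image σ := fun i hi =>
    mem_image.mpr (exists_eq_of_lt_freq hf hout (hkK.le.trans hKn) (by omega) hi)
  have hbefore : ∀ j ∈ Icc 1 K, ∀ j' ∈ Icc 1 K, σ j ∈ Icc 1 k → σ j' ∉ Icc 1 k → j < j' := by
    intro j hj j' hj' hσj hσj'
    have hσjn := hσmem j hj
    have hσj'n := hσmem j' hj'
    simp only [mem_Icc] at hσj hσj' hσjn hσj'n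
    have hk : f k ≤ f (σ j) :=
      hf (mem_Icc.mpr ⟨by omega, by omega⟩) (mem_Icc.mpr ⟨by omega, by omega⟩) hσj.2
    have hk' : f (σ j') ≤ f (k + 1) :=
      hf (mem_Icc.mpr ⟨by omega, by omega⟩) (mem_Icc.mpr ⟨by omega, by omega⟩) (by omega)
    exact lt_of_freq_add_lt_freq (fun a ha b hb => hcmono a ha b hb) hup hlow hj hj' (by omega)
  simpa using image_Icc_card_eq_of_forall_lt (fun a ha b hb => hσinj a ha b hb) hcover hbefore

/-- exact Top-k: under the SpaceSaving guarantees with table size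
`K`, if `k < K ≤ n` and `c K < f k - f (k+1)`, then the `k` table positions
with largest counters hold exactly the `k` most frequent elements:
`{σ 1, …, σ k} = {1, …, k}`. -/
theorem stmt4
    (n K N : ℕ) (f c σ : ℕ → ℕ)
    (hfmono : ∀ i ∈ Finset.Icc 1 n, ∀ j ∈ Finset.Icc 1 n, i ≤ j → f j ≤ f i)
    (hfsum : ∑ i ∈ Finset.Icc 1 n, f i = N)
    (hcmono : ∀ i ∈ Finset.Icc 1 K, ∀ j ∈ Finset.Icc 1 K, i ≤ j → c j ≤ c i)
    (hcsum : ∑ j ∈ Finset.Icc 1 K, c j = N)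
    (hσmem : ∀ j ∈ Finset.Icc 1 K, σ j ∈ Finset.Icc 1 n)
    (hσinj : ∀ j ∈ Finset.Icc 1 K, ∀ j' ∈ Finset.Icc 1 K, σ j = σ j' → j = j')
    (hlow : ∀ j ∈ Finset.Icc 1 K, c j ≤ f (σ j) + c K)
    (hup : ∀ j ∈ Finset.Icc 1 K, f (σ j) ≤ c j)
    (hout : ∀ i ∈ Finset.Icc 1 n, (∀ j ∈ Finset.Icc 1 K, σ j ≠ i) → f i ≤ c K)
    (k : ℕ) (hk1 : 1 ≤ k) (hkK : k < K) (hKn : K ≤ n)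
    (hgap : (c K : ℝ) < (f k : ℝ) - (f (k + 1) : ℝ)) :
    Finset.image σ (Finset.Icc 1 k) = Finset.Icc 1 k :=
  stmt4_general n K f c σ hfmono hcmono hσmem hσinj hlow hup hout k hkK hKn hgap
end

section
/- (Approximate Top-k result.) Assume the SpaceSaving guarantees with table size K on a stream of length N with sorted frequency function f. Let k < K ≤ n, let 0 < ε < 1, suppose f(k) > 0 and c_K ≤ ε·f(k). Then every index i ∈ {1,…,n} with f(i) > (1+ε)·f(k) belongs to the set {σ(1),…,σ(k)} of elements at the k largest table positions, and no index i with f(i) < (1−ε)·f(k) belongs to {σ(1),…,σ(k)}. -/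
/-!
Both the counters and the frequencies are sorted, and σ matches counters to frequencies up to an
additive error `c K`; comparing how many entries exceed a threshold on each side shows that the
`j`-th counter and the `j`-th frequency also agree up to `c K`: `f j ≤ c j ≤ f j + c K`. An element
outside the top `k` table positions therefore has frequency at most `c (k+1) ≤ f k + c K`, and one
inside has frequency at least `c k - c K ≥ f k - c K`; with `c K ≤ ε f k` both claims follow.
-/

open scoped Finset

theorem le_apply_iff_le_card_filter {g : ℕ → ℕ} {m k t : ℕ}
    (hg : AntitoneOn g (Finset.Icc 1 m)) (hk1 : 1 ≤ k) (hkm : k ≤ m) :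
    t ≤ g k ↔ k ≤ #{i ∈ Finset.Icc 1 m | t ≤ g i} := by
  have hkmem : k ∈ Finset.Icc 1 m := Finset.mem_Icc.2 ⟨hk1, hkm⟩
  constructor
  · intro ht
    have hsub : Finset.Icc 1 k ⊆ {i ∈ Finset.Icc 1 m | t ≤ g i} := by
      intro i hi
      obtain ⟨hi1, hik⟩ := Finset.mem_Icc.1 hi
      have him : i ∈ Finset.Icc 1 m := Finset.mem_Icc.2 ⟨hi1, hik.trans hkm⟩
      exact Finset.mem_filter.2 ⟨him, ht.trans (hg him hkmem hik)⟩
    simpa using Finset.card_le_card hsub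
  · intro hcard
    by_contra! hlt
    have hsub : {i ∈ Finset.Icc 1 m | t ≤ g i} ⊆ Finset.Icc 1 (k - 1) := by
      intro i hi
      obtain ⟨him, hti⟩ := Finset.mem_filter.1 hi
      obtain ⟨hi1, -⟩ := Finset.mem_Icc.1 him
      have hik : i < k := by
        by_contra! hki
        exact (hti.trans (hg hkmem him hki)).not_gt hlt
      exact Finset.mem_Icc.2 ⟨hi1, by omega⟩
    have := Finset.card_le_card hsub
    simp only [Nat.card_Icc] at this
    omega

section SpaceSaving

variable {n K k : ℕ} {f c σ : ℕ → ℕ}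

theorem freq_le_counter (hf : AntitoneOn f (Finset.Icc 1 n)) (hc : AntitoneOn c (Finset.Icc 1 K))
    (hup : ∀ j ∈ Finset.Icc 1 K, f (σ j) ≤ c j)
    (hout : ∀ i ∈ Finset.Icc 1 n, (∀ j ∈ Finset.Icc 1 K, σ j ≠ i) → f i ≤ c K)
    (hk1 : 1 ≤ k) (hkK : k ≤ K) (hkn : k ≤ n) : f k ≤ c k := by
  by_cases hfc : f k ≤ c K
  · exact hfc.trans (hc (Finset.mem_Icc.2 ⟨hk1, hkK⟩) (Finset.mem_Icc.2 ⟨hk1.trans hkK, le_rfl⟩) hkK)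
  rw [not_le] at hfc
  have hsub : {i ∈ Finset.Icc 1 n | f k ≤ f i} ⊆
      Finset.image σ {j ∈ Finset.Icc 1 K | f k ≤ c j} := by
    intro i hi
    obtain ⟨hin, hki⟩ := Finset.mem_filter.1 hi
    obtain ⟨j, hj, rfl⟩ : ∃ j ∈ Finset.Icc 1 K, σ j = i := by
      by_contra! hnot
      have := hout i hin hnot
      omega
    exact Finset.mem_image_of_mem σ (Finset.mem_filter.2 ⟨hj, hki.trans (hup j hj)⟩)
  rw [le_apply_iff_le_card_filter hc hk1 hkK]
  calc k ≤ #{i ∈ Finset.Icc 1 n | f k ≤ f i} := (le_apply_iff_le_card_filter hf hk1 hkn).1 le_rfl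
    _ ≤ #(Finset.image σ {j ∈ Finset.Icc 1 K | f k ≤ c j}) := Finset.card_le_card hsub
    _ ≤ #{j ∈ Finset.Icc 1 K | f k ≤ c j} := Finset.card_image_le

theorem counter_le_freq_add (hf : AntitoneOn f (Finset.Icc 1 n))
    (hc : AntitoneOn c (Finset.Icc 1 K))
    (hσ : Set.MapsTo σ (Finset.Icc 1 K) (Finset.Icc 1 n)) (hσinj : Set.InjOn σ (Finset.Icc 1 K))
    (hlow : ∀ j ∈ Finset.Icc 1 K, c j ≤ f (σ j) + c K)
    (hk1 : 1 ≤ k) (hkK : k ≤ K) (hkn : k ≤ n) : c k ≤ f k + c K := by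
  have hkmem : k ∈ Finset.Icc 1 K := Finset.mem_Icc.2 ⟨hk1, hkK⟩
  have htop : Finset.Icc 1 k ⊆ Finset.Icc 1 K := Finset.Icc_subset_Icc le_rfl hkK
  have hsub : Finset.image σ (Finset.Icc 1 k) ⊆ {i ∈ Finset.Icc 1 n | c k - c K ≤ f i} := by
    intro i hi
    obtain ⟨j, hj, rfl⟩ := Finset.mem_image.1 hi
    have hjK := htop hj
    have hcj : c k ≤ c j := hc hjK hkmem (Finset.mem_Icc.1 hj).2
    have := hlow j hjK
    exact Finset.mem_filter.2 ⟨hσ hjK, by omega⟩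
  suffices c k - c K ≤ f k by omega
  rw [le_apply_iff_le_card_filter hf hk1 hkn]
  calc k = #(Finset.image σ (Finset.Icc 1 k)) := by
        rw [Finset.card_image_of_injOn (hσinj.mono (Finset.coe_subset.2 htop))]
        simp
    _ ≤ _ := Finset.card_le_card hsub

theorem freq_le_add_of_notMem_image (hf : AntitoneOn f (Finset.Icc 1 n))
    (hc : AntitoneOn c (Finset.Icc 1 K))
    (hσ : Set.MapsTo σ (Finset.Icc 1 K) (Finset.Icc 1 n)) (hσinj : Set.InjOn σ (Finset.Icc 1 K))
    (hlow : ∀ j ∈ Finset.Icc 1 K, c j ≤ f (σ j) + c K) (hup : ∀ j ∈ Finset.Icc 1 K, f (σ j) ≤ c j)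
    (hout : ∀ i ∈ Finset.Icc 1 n, (∀ j ∈ Finset.Icc 1 K, σ j ≠ i) → f i ≤ c K)
    (hk1 : 1 ≤ k) (hkK : k < K) (hkn : k < n) {i : ℕ} (hi : i ∈ Finset.Icc 1 n)
    (hik : i ∉ Finset.image σ (Finset.Icc 1 k)) : f i ≤ f k + c K := by
  by_cases hstored : ∀ j ∈ Finset.Icc 1 K, σ j ≠ i
  · exact (hout i hi hstored).trans (Nat.le_add_left _ _)
  push Not at hstored
  obtain ⟨j, hj, rfl⟩ := hstored
  have hkj : k + 1 ≤ j := by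
    by_contra! hjk
    exact hik (Finset.mem_image_of_mem σ (Finset.mem_Icc.2 ⟨(Finset.mem_Icc.1 hj).1, by omega⟩))
  have hk1mem : k + 1 ∈ Finset.Icc 1 K := Finset.mem_Icc.2 ⟨by omega, hkK⟩
  calc f (σ j) ≤ c j := hup j hj
    _ ≤ c (k + 1) := hc hk1mem hj hkj
    _ ≤ f (k + 1) + c K := counter_le_freq_add hf hc hσ hσinj hlow (by omega) hkK (by omega)
    _ ≤ f k + c K := by
      gcongr
      exact hf (Finset.mem_Icc.2 ⟨hk1, by omega⟩) (Finset.mem_Icc.2 ⟨by omega, by omega⟩) k.le_succ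

theorem freq_le_add_of_mem_image (hf : AntitoneOn f (Finset.Icc 1 n))
    (hc : AntitoneOn c (Finset.Icc 1 K))
    (hlow : ∀ j ∈ Finset.Icc 1 K, c j ≤ f (σ j) + c K) (hup : ∀ j ∈ Finset.Icc 1 K, f (σ j) ≤ c j)
    (hout : ∀ i ∈ Finset.Icc 1 n, (∀ j ∈ Finset.Icc 1 K, σ j ≠ i) → f i ≤ c K)
    (hk1 : 1 ≤ k) (hkK : k ≤ K) (hkn : k ≤ n) {i : ℕ}
    (hik : i ∈ Finset.image σ (Finset.Icc 1 k)) : f k ≤ f i + c K := by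
  obtain ⟨j, hj, rfl⟩ := Finset.mem_image.1 hik
  have hjK : j ∈ Finset.Icc 1 K := Finset.Icc_subset_Icc le_rfl hkK hj
  calc f k ≤ c k := freq_le_counter hf hc hup hout hk1 hkK hkn
    _ ≤ c j := hc hjK (Finset.mem_Icc.2 ⟨hk1, hkK⟩) (Finset.mem_Icc.1 hj).2
    _ ≤ f (σ j) + c K := hlow j hjK

end SpaceSaving

theorem stmt5_general
    (n K : ℕ) (f c σ : ℕ → ℕ)
    (hfmono : ∀ i ∈ Finset.Icc 1 n, ∀ j ∈ Finset.Icc 1 n, i ≤ j → f j ≤ f i)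
    (hcmono : ∀ i ∈ Finset.Icc 1 K, ∀ j ∈ Finset.Icc 1 K, i ≤ j → c j ≤ c i)
    (hσmem : ∀ j ∈ Finset.Icc 1 K, σ j ∈ Finset.Icc 1 n)
    (hσinj : ∀ j ∈ Finset.Icc 1 K, ∀ j' ∈ Finset.Icc 1 K, σ j = σ j' → j = j')
    (hlow : ∀ j ∈ Finset.Icc 1 K, c j ≤ f (σ j) + c K)
    (hup : ∀ j ∈ Finset.Icc 1 K, f (σ j) ≤ c j)
    (hout : ∀ i ∈ Finset.Icc 1 n, (∀ j ∈ Finset.Icc 1 K, σ j ≠ i) → f i ≤ c K)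
    (k : ℕ) (ε : ℝ) (hk1 : 1 ≤ k) (hkK : k < K) (hKn : K ≤ n)
    (hcK : (c K : ℝ) ≤ ε * (f k : ℝ)) :
    ∀ i ∈ Finset.Icc 1 n,
      ((1 + ε) * (f k : ℝ) < (f i : ℝ) → i ∈ Finset.image σ (Finset.Icc 1 k)) ∧
      ((f i : ℝ) < (1 - ε) * (f k : ℝ) → i ∉ Finset.image σ (Finset.Icc 1 k)) := by
  have hf : AntitoneOn f (Finset.Icc 1 n) := hfmono
  have hc : AntitoneOn c (Finset.Icc 1 K) := hcmono
  have hσ : Set.MapsTo σ (Finset.Icc 1 K) (Finset.Icc 1 n) := hσmem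
  have hσinj' : Set.InjOn σ (Finset.Icc 1 K) := hσinj
  intro i hi
  constructor
  · intro hgt
    by_contra hik
    have := freq_le_add_of_notMem_image hf hc hσ hσinj' hlow hup hout hk1 hkK (hkK.trans_le hKn) hi hik
    have : (f i : ℝ) ≤ f k + c K := by exact_mod_cast this
    linarith
  · intro hlt hik
    have := freq_le_add_of_mem_image hf hc hlow hup hout hk1 hkK.le (hkK.le.trans hKn) hik
    have : (f k : ℝ) ≤ f i + c K := by exact_mod_cast this
    linarith

/-- approximate Top-k: under the SpaceSaving guarantees with
table size `K`, if `k < K ≤ n`, `0 < ε < 1`, `f k > 0` and `c K ≤ ε · f k`,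
then every index `i` with `f i > (1+ε)·f k` is among `{σ 1, …, σ k}`, and no
index `i` with `f i < (1-ε)·f k` is among `{σ 1, …, σ k}`. -/
theorem stmt5
    (n K N : ℕ) (f c σ : ℕ → ℕ)
    (hfmono : ∀ i ∈ Finset.Icc 1 n, ∀ j ∈ Finset.Icc 1 n, i ≤ j → f j ≤ f i)
    (hfsum : ∑ i ∈ Finset.Icc 1 n, f i = N)
    (hcmono : ∀ i ∈ Finset.Icc 1 K, ∀ j ∈ Finset.Icc 1 K, i ≤ j → c j ≤ c i)
    (hcsum : ∑ j ∈ Finset.Icc 1 K, c j = N)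
    (hσmem : ∀ j ∈ Finset.Icc 1 K, σ j ∈ Finset.Icc 1 n)
    (hσinj : ∀ j ∈ Finset.Icc 1 K, ∀ j' ∈ Finset.Icc 1 K, σ j = σ j' → j = j')
    (hlow : ∀ j ∈ Finset.Icc 1 K, c j ≤ f (σ j) + c K)
    (hup : ∀ j ∈ Finset.Icc 1 K, f (σ j) ≤ c j)
    (hout : ∀ i ∈ Finset.Icc 1 n, (∀ j ∈ Finset.Icc 1 K, σ j ≠ i) → f i ≤ c K)
    (k : ℕ) (ε : ℝ) (hk1 : 1 ≤ k) (hkK : k < K) (hKn : K ≤ n)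
    (hε0 : 0 < ε) (hε1 : ε < 1) (hfk : 0 < f k)
    (hcK : (c K : ℝ) ≤ ε * (f k : ℝ)) :
    ∀ i ∈ Finset.Icc 1 n,
      ((1 + ε) * (f k : ℝ) < (f i : ℝ) → i ∈ Finset.image σ (Finset.Icc 1 k)) ∧
      ((f i : ℝ) < (1 - ε) * (f k : ℝ) → i ∉ Finset.image σ (Finset.Icc 1 k)) :=
  stmt5_general n K f c σ hfmono hcmono hσmem hσinj hlow hup hout k ε hk1 hkK hKn hcK
end

section
/- (SpaceSaving Lemma.) Let E be a finite set, let Δ be a natural number, and let occ, count : E → ℕ satisfy occ(e) ≤ count(e) ≤ occ(e) + Δ for every e ∈ E. Fix 1 ≤ r ≤ |E|. Let ẽ ∈ E be an element whose count value has rank r among all count values (counted with multiplicity), i.e. |{e ∈ E : count(e) > count(ẽ)}| < r ≤ |{e ∈ E : count(e) ≥ count(ẽ)}|, and let e' ∈ E be an element whose occ value has rank r among all occ values in the same sense. Then count(ẽ) − Δ ≤ occ(e') ≤ count(ẽ), and consequently |count(e') − count(ẽ)| ≤ Δ. -/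
/-- SpaceSaving Lemma: if `occ e ≤ count e ≤ occ e + Δ` for every
`e` in a finite set `E`, `ẽ` has the `r`-th largest `count` value and `e'` has
the `r`-th largest `occ` value, then `count ẽ - Δ ≤ occ e' ≤ count ẽ`, and
hence `|count e' - count ẽ| ≤ Δ`. -/
theorem stmt6 {α : Type*} [DecidableEq α] (E : Finset α) (occ count : α → ℕ)
    (Δ : ℕ) (r : ℕ)
    (hbound : ∀ e ∈ E, occ e ≤ count e ∧ count e ≤ occ e + Δ)
    (hr1 : 1 ≤ r) (hr2 : r ≤ E.card)
    (etil e' : α) (hetil : etil ∈ E) (he' : e' ∈ E)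
    (hrankc : (E.filter (fun e => count etil < count e)).card < r ∧
              r ≤ (E.filter (fun e => count etil ≤ count e)).card)
    (hranko : (E.filter (fun e => occ e' < occ e)).card < r ∧
              r ≤ (E.filter (fun e => occ e' ≤ occ e)).card) :
    (count etil ≤ occ e' + Δ ∧ occ e' ≤ count etil) ∧
      |(count e' : ℤ) - (count etil : ℤ)| ≤ (Δ : ℤ) := by
  have h1 : occ e' ≤ count etil := by
    by_contra h
    push_neg at h
    have hsub : (E.filter (fun e => occ e' ≤ occ e)).card ≤
        (E.filter (fun e => count etil < count e)).card := by
      apply Finset.card_le_card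
      intro e he
      simp only [Finset.mem_filter] at he ⊢
      have := (hbound e he.1).1
      exact ⟨he.1, by omega⟩
    omega
  have h2 : count etil ≤ occ e' + Δ := by
    by_contra h
    push_neg at h
    have hsub : (E.filter (fun e => count etil ≤ count e)).card ≤
        (E.filter (fun e => occ e' < occ e)).card := by
      apply Finset.card_le_card
      intro e he
      simp only [Finset.mem_filter] at he ⊢
      have := (hbound e he.1).2
      exact ⟨he.1, by omega⟩
    omega
  refine ⟨⟨h2, h1⟩, ?_⟩
  have hb' := hbound e' he'
  rw [abs_le]
  constructor <;> [skip; skip] <;> push_cast <;> omega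
end

section
/- (Distance Lemma: equivalence of the two definitions of relative Fréchet closeness.) Let 0 < ε₁, ε₂ < 1 and let f, g : {1,…,n} → ℝ≥0 be nonincreasing. Then the following are equivalent: (i) for every t ∈ {1,…,n} there exists t' ∈ {1,…,n} such that (t, f(t)) and (t', g(t')) are (ε₁,ε₂)-close, and for every t there exists t' such that (t, g(t)) and (t', f(t')) are (ε₁,ε₂)-close; (ii) there exists a coupling between f and g of relative length (ε₁,ε₂). -/
/-- `a ≃_ε b`: `|a - b| ≤ ε * min a b`. -/
def epsClose (ε a b : ℝ) : Prop := |a - b| ≤ ε * min a b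

/-- Two points of `ℝ²` are `(ε₁, ε₂)`-close. -/
def ptsClose (ε₁ ε₂ : ℝ) (p q : ℝ × ℝ) : Prop :=
  epsClose ε₁ p.1 q.1 ∧ epsClose ε₂ p.2 q.2

/-- There is a coupling between `f` and `g` (on `{1,…,n}`) of relative length
`(ε₁, ε₂)`: a sequence of index pairs `(a i, b i)`, `i = 1,…,m`, starting at
`(1,1)`, ending at `(n,n)`, advancing each coordinate by `0` or `1` at each
step, such that the paired points of `f` and `g` are `(ε₁, ε₂)`-close. -/
def couplingClose (n : ℕ) (ε₁ ε₂ : ℝ) (f g : ℕ → ℝ) : Prop :=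
  ∃ (m : ℕ) (a b : ℕ → ℕ), 1 ≤ m ∧
    a 1 = 1 ∧ b 1 = 1 ∧ a m = n ∧ b m = n ∧
    (∀ i : ℕ, 1 ≤ i → i < m →
      (a (i + 1) = a i ∨ a (i + 1) = a i + 1) ∧
      (b (i + 1) = b i ∨ b (i + 1) = b i + 1)) ∧
    (∀ i : ℕ, 1 ≤ i → i ≤ m →
      ptsClose ε₁ ε₂ ((a i : ℝ), f (a i)) ((b i : ℝ), g (b i)))

lemma epsClose_iff {ε a b : ℝ} (hε : 0 ≤ ε) (ha : 0 ≤ a) (hb : 0 ≤ b) :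
    epsClose ε a b ↔ a ≤ (1 + ε) * b ∧ b ≤ (1 + ε) * a := by
  unfold epsClose
  rcases le_total a b with h | h
  · rw [min_eq_left h, abs_sub_comm, abs_of_nonneg (by linarith)]
    constructor
    · intro h'; exact ⟨by nlinarith, by nlinarith⟩
    · rintro ⟨h1, h2⟩; nlinarith
  · rw [min_eq_right h, abs_of_nonneg (by linarith)]
    constructor
    · intro h'; exact ⟨by nlinarith, by nlinarith⟩
    · rintro ⟨h1, h2⟩; nlinarith

lemma epsClose_symm {ε a b : ℝ} (h : epsClose ε a b) : epsClose ε b a := by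
  unfold epsClose at *; rwa [abs_sub_comm, min_comm]

lemma epsClose_cross {ε x x' y y' : ℝ} (hε : 0 ≤ ε)
    (hx : 0 ≤ x) (hx' : 0 ≤ x') (hy : 0 ≤ y) (hy' : 0 ≤ y')
    (hxy : x ≤ y) (hyx : y' ≤ x')
    (h1 : epsClose ε x x') (h2 : epsClose ε y y') :
    epsClose ε x y' ∧ epsClose ε y x' := by
  rw [epsClose_iff hε hx hx'] at h1
  rw [epsClose_iff hε hy hy'] at h2
  rw [epsClose_iff hε hx hy', epsClose_iff hε hy hx']
  exact ⟨⟨by nlinarith, by nlinarith⟩, ⟨by nlinarith, by nlinarith⟩⟩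


lemma walk_mono (m : ℕ) (a : ℕ → ℕ)
    (hstep : ∀ i, 1 ≤ i → i < m → a (i + 1) = a i ∨ a (i + 1) = a i + 1) :
    ∀ k, k ≤ m → ∀ i, 1 ≤ i → i ≤ k → a i ≤ a k := by
  intro k
  induction k with
  | zero => intro _ i hi hik; omega
  | succ k ih =>
    intro hk i hi hik
    rcases Nat.eq_or_lt_of_le hik with h | h
    · subst h; exact le_refl _
    · have hik' : i ≤ k := by omega
      have h1k : 1 ≤ k := le_trans hi hik'
      have h2 := ih (by omega) i hi hik'
      rcases hstep k h1k (by omega) with h' | h' <;> omega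

lemma walk_surj (m n : ℕ) (a : ℕ → ℕ) (hm : 1 ≤ m) (ha1 : a 1 = 1) (ham : a m = n)
    (hstep : ∀ i, 1 ≤ i → i < m → a (i + 1) = a i ∨ a (i + 1) = a i + 1)
    (t : ℕ) (h1t : 1 ≤ t) (htn : t ≤ n) : ∃ i, 1 ≤ i ∧ i ≤ m ∧ a i = t := by
  have hne : ((Finset.Icc 1 m).filter (fun i => a i ≤ t)).Nonempty :=
    ⟨1, Finset.mem_filter.mpr ⟨Finset.mem_Icc.mpr ⟨le_refl 1, hm⟩, by rw [ha1]; exact h1t⟩⟩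
  set i₀ := ((Finset.Icc 1 m).filter (fun i => a i ≤ t)).max' hne with hi₀
  have hmem := Finset.max'_mem _ hne
  rw [Finset.mem_filter, Finset.mem_Icc] at hmem
  obtain ⟨⟨h1i, him⟩, hat⟩ := hmem
  rw [← hi₀] at h1i him hat
  refine ⟨i₀, h1i, him, ?_⟩
  by_contra hne'
  have hlt : a i₀ < t := lt_of_le_of_ne hat hne'
  have him' : i₀ < m := by
    rcases Nat.eq_or_lt_of_le him with h | h
    · rw [h, ham] at hlt; omega
    · exact h
  have hstep' := hstep i₀ h1i him'
  have hmem2 : i₀ + 1 ∈ (Finset.Icc 1 m).filter (fun i => a i ≤ t) := by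
    rw [Finset.mem_filter, Finset.mem_Icc]
    refine ⟨⟨by omega, by omega⟩, ?_⟩
    rcases hstep' with h' | h' <;> simp only [h'] <;> omega
  have := Finset.le_max' _ _ hmem2
  omega

def dlStep (n : ℕ) (σ τ : ℕ → ℕ) (q : ℕ × ℕ) : ℕ × ℕ :=
  if q.1 = n ∧ q.2 = n then q
  else if q.2 < n ∧ τ (q.2 + 1) ≤ q.1 then (q.1, q.2 + 1)
  else if q.1 < n ∧ σ (q.1 + 1) ≤ q.2 then (q.1 + 1, q.2)
  else (q.1 + 1, q.2 + 1)

lemma dlStep_01 (n : ℕ) (σ τ : ℕ → ℕ) (q : ℕ × ℕ) :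
    ((dlStep n σ τ q).1 = q.1 ∨ (dlStep n σ τ q).1 = q.1 + 1) ∧
    ((dlStep n σ τ q).2 = q.2 ∨ (dlStep n σ τ q).2 = q.2 + 1) := by
  unfold dlStep; split_ifs <;> simp

def dlInv (n : ℕ) (σ τ : ℕ → ℕ) (q : ℕ × ℕ) : Prop :=
  1 ≤ q.1 ∧ q.1 ≤ n ∧ 1 ≤ q.2 ∧ q.2 ≤ n ∧ σ q.1 ≤ q.2 ∧ τ q.2 ≤ q.1

lemma dlStep_inv (n : ℕ) (σ τ : ℕ → ℕ)
    (hσbd : ∀ t, 1 ≤ t → t ≤ n → 1 ≤ σ t ∧ σ t ≤ n)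
    (hτbd : ∀ j, 1 ≤ j → j ≤ n → 1 ≤ τ j ∧ τ j ≤ n)
    (hσmono : ∀ t s, 1 ≤ t → s ≤ n → t ≤ s → σ t ≤ σ s)
    (hστ : ∀ j, 1 ≤ j → j ≤ n → σ (τ j) ≤ j)
    (hτσ : ∀ t, 1 ≤ t → t ≤ n → τ (σ t) ≤ t)
    (q : ℕ × ℕ) (hq : dlInv n σ τ q) :
    dlInv n σ τ (dlStep n σ τ q) ∧
      (¬(q.1 = n ∧ q.2 = n) →
        q.1 + q.2 + 1 ≤ (dlStep n σ τ q).1 + (dlStep n σ τ q).2) := by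
  obtain ⟨h1, h2, h3, h4, h5, h6⟩ := hq
  unfold dlStep dlInv
  split_ifs with c1 c2 c3
  · exact ⟨⟨h1, h2, h3, h4, h5, h6⟩, fun h => absurd c1 h⟩
  · obtain ⟨c2a, c2b⟩ := c2
    dsimp only
    exact ⟨⟨h1, h2, by omega, c2a, by omega, c2b⟩, fun _ => by omega⟩
  · obtain ⟨c3a, c3b⟩ := c3
    dsimp only
    exact ⟨⟨by omega, c3a, h3, h4, c3b, by omega⟩, fun _ => by omega⟩
  · have ht : q.1 < n := by
      by_contra h; push_neg at h
      have hq1 : q.1 = n := le_antisymm h2 h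
      have hj : q.2 < n := by
        rcases Nat.eq_or_lt_of_le h4 with h' | h'
        · exact absurd ⟨hq1, h'⟩ c1
        · exact h'
      exact c2 ⟨hj, by have := (hτbd (q.2 + 1) (by omega) (by omega)).2; omega⟩
    have hj : q.2 < n := by
      by_contra h; push_neg at h
      have hq2 : q.2 = n := le_antisymm h4 h
      exact c3 ⟨ht, by have := (hσbd (q.1 + 1) (by omega) (by omega)).2; omega⟩
    have hτ1 : q.1 + 1 ≤ τ (q.2 + 1) := by
      by_contra h; push_neg at h; exact c2 ⟨hj, by omega⟩
    have hσ1 : q.2 + 1 ≤ σ (q.1 + 1) := by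
      by_contra h; push_neg at h; exact c3 ⟨ht, by omega⟩
    have hσeq : σ (q.1 + 1) ≤ q.2 + 1 := by
      by_contra h; push_neg at h
      have hs2 : τ (q.2 + 1) ≤ n := (hτbd _ (by omega) (by omega)).2
      have hA := hσmono (q.1 + 1) (τ (q.2 + 1)) (by omega) hs2 hτ1
      have hB := hστ (q.2 + 1) (by omega) (by omega)
      omega
    have hτeq : τ (q.2 + 1) ≤ q.1 + 1 := by
      have he : σ (q.1 + 1) = q.2 + 1 := le_antisymm hσeq hσ1
      have := hτσ (q.1 + 1) (by omega) (by omega)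
      rwa [he] at this
    dsimp only
    exact ⟨⟨by omega, ht, by omega, hj, hσeq, hτeq⟩, fun _ => by omega⟩

/-- The closeness relation on the index grid. -/
def dlC (ε₁ ε₂ : ℝ) (f g : ℕ → ℝ) (t j : ℕ) : Prop :=
  ptsClose ε₁ ε₂ ((t : ℝ), f t) ((j : ℝ), g j)

lemma dlC_cross (n : ℕ) (ε₁ ε₂ : ℝ) (hε₁0 : 0 ≤ ε₁) (hε₂0 : 0 ≤ ε₂) (f g : ℕ → ℝ)
    (hf0 : ∀ i, 1 ≤ i → i ≤ n → 0 ≤ f i) (hg0 : ∀ i, 1 ≤ i → i ≤ n → 0 ≤ g i)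
    (hfm : ∀ i j, 1 ≤ i → i ≤ j → j ≤ n → f j ≤ f i)
    (hgm : ∀ i j, 1 ≤ i → i ≤ j → j ≤ n → g j ≤ g i)
    {t s t' s' : ℕ} (ht : 1 ≤ t) (hs : s ≤ n) (hts : t ≤ s)
    (hs' : 1 ≤ s') (ht' : t' ≤ n) (hst : s' ≤ t')
    (h1 : dlC ε₁ ε₂ f g t t') (h2 : dlC ε₁ ε₂ f g s s') :
    dlC ε₁ ε₂ f g t s' ∧ dlC ε₁ ε₂ f g s t' := by
  unfold dlC ptsClose at h1 h2 ⊢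
  dsimp only at h1 h2 ⊢
  obtain ⟨hx1, hy1⟩ := h1
  obtain ⟨hx2, hy2⟩ := h2
  have h1s : 1 ≤ s := le_trans ht hts
  have htn : t ≤ n := le_trans hts hs
  have h1t' : 1 ≤ t' := le_trans hs' hst
  have hs'n : s' ≤ n := le_trans hst ht'
  have hxc := epsClose_cross hε₁0 (Nat.cast_nonneg t) (Nat.cast_nonneg t')
    (Nat.cast_nonneg s) (Nat.cast_nonneg s')
    (by exact_mod_cast hts) (by exact_mod_cast hst) hx1 hx2
  have hyc := epsClose_cross hε₂0 (hf0 s h1s hs) (hg0 s' hs' hs'n)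
    (hf0 t ht htn) (hg0 t' h1t' ht')
    (hfm t s ht hts hs) (hgm s' t' hs' hst ht') hy2 hy1
  exact ⟨⟨hxc.1, hyc.2⟩, ⟨hxc.2, hyc.1⟩⟩

noncomputable def dlSigma (n : ℕ) (ε₁ ε₂ : ℝ) (f g : ℕ → ℝ) (t : ℕ) : ℕ :=
  sInf {j | (1 ≤ j ∧ j ≤ n) ∧ dlC ε₁ ε₂ f g t j}

noncomputable def dlTau (n : ℕ) (ε₁ ε₂ : ℝ) (f g : ℕ → ℝ) (j : ℕ) : ℕ :=
  sInf {t | (1 ≤ t ∧ t ≤ n) ∧ dlC ε₁ ε₂ f g t j}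

theorem forward_dir (n : ℕ) (hn : 1 ≤ n) (ε₁ ε₂ : ℝ)
    (hε₁0 : 0 < ε₁) (hε₁1 : ε₁ < 1) (hε₂0 : 0 < ε₂)
    (f g : ℕ → ℝ)
    (hfnonneg : ∀ i ∈ Finset.Icc 1 n, 0 ≤ f i)
    (hgnonneg : ∀ i ∈ Finset.Icc 1 n, 0 ≤ g i)
    (hfmono : ∀ i ∈ Finset.Icc 1 n, ∀ j ∈ Finset.Icc 1 n, i ≤ j → f j ≤ f i)
    (hgmono : ∀ i ∈ Finset.Icc 1 n, ∀ j ∈ Finset.Icc 1 n, i ≤ j → g j ≤ g i)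
    (h1 : ∀ t ∈ Finset.Icc 1 n, ∃ t' ∈ Finset.Icc 1 n,
        ptsClose ε₁ ε₂ ((t : ℝ), f t) ((t' : ℝ), g t'))
    (h2 : ∀ t ∈ Finset.Icc 1 n, ∃ t' ∈ Finset.Icc 1 n,
        ptsClose ε₁ ε₂ ((t : ℝ), g t) ((t' : ℝ), f t')) :
    couplingClose n ε₁ ε₂ f g := by
  have hf0 : ∀ i, 1 ≤ i → i ≤ n → 0 ≤ f i := fun i h h' =>
    hfnonneg i (Finset.mem_Icc.mpr ⟨h, h'⟩)
  have hg0 : ∀ i, 1 ≤ i → i ≤ n → 0 ≤ g i := fun i h h' =>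
    hgnonneg i (Finset.mem_Icc.mpr ⟨h, h'⟩)
  have hfm : ∀ i j, 1 ≤ i → i ≤ j → j ≤ n → f j ≤ f i := fun i j hi hij hj =>
    hfmono i (Finset.mem_Icc.mpr ⟨hi, le_trans hij hj⟩)
      j (Finset.mem_Icc.mpr ⟨le_trans hi hij, hj⟩) hij
  have hgm : ∀ i j, 1 ≤ i → i ≤ j → j ≤ n → g j ≤ g i := fun i j hi hij hj =>
    hgmono i (Finset.mem_Icc.mpr ⟨hi, le_trans hij hj⟩)
      j (Finset.mem_Icc.mpr ⟨le_trans hi hij, hj⟩) hij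
  have cross := fun {t s t' s' : ℕ} =>
    dlC_cross n ε₁ ε₂ hε₁0.le hε₂0.le f g hf0 hg0 hfm hgm (t := t) (s := s) (t' := t') (s' := s')
  have hex1 : ∀ t, 1 ≤ t → t ≤ n → ∃ j, (1 ≤ j ∧ j ≤ n) ∧ dlC ε₁ ε₂ f g t j := by
    intro t ht htn
    obtain ⟨j, hjmem, hcl⟩ := h1 t (Finset.mem_Icc.mpr ⟨ht, htn⟩)
    exact ⟨j, Finset.mem_Icc.mp hjmem, hcl⟩
  have hex2 : ∀ t, 1 ≤ t → t ≤ n → ∃ j, (1 ≤ j ∧ j ≤ n) ∧ dlC ε₁ ε₂ f g j t := by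
    intro t ht htn
    obtain ⟨j, hjmem, hcl⟩ := h2 t (Finset.mem_Icc.mpr ⟨ht, htn⟩)
    exact ⟨j, Finset.mem_Icc.mp hjmem, ⟨epsClose_symm hcl.1, epsClose_symm hcl.2⟩⟩
  set σ : ℕ → ℕ := dlSigma n ε₁ ε₂ f g with hσdef
  set τ : ℕ → ℕ := dlTau n ε₁ ε₂ f g with hτdef
  have hσmem : ∀ t, 1 ≤ t → t ≤ n → (1 ≤ σ t ∧ σ t ≤ n) ∧ dlC ε₁ ε₂ f g t (σ t) := by
    intro t ht htn
    exact Nat.sInf_mem (hex1 t ht htn)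
  have hτmem : ∀ j, 1 ≤ j → j ≤ n → (1 ≤ τ j ∧ τ j ≤ n) ∧ dlC ε₁ ε₂ f g (τ j) j := by
    intro j hj hjn
    exact Nat.sInf_mem (hex2 j hj hjn)
  have hσle : ∀ t j, 1 ≤ j → j ≤ n → dlC ε₁ ε₂ f g t j → σ t ≤ j :=
    fun t j hj hjn hc => Nat.sInf_le ⟨⟨hj, hjn⟩, hc⟩
  have hτle : ∀ j t, 1 ≤ t → t ≤ n → dlC ε₁ ε₂ f g t j → τ j ≤ t :=
    fun j t ht htn hc => Nat.sInf_le ⟨⟨ht, htn⟩, hc⟩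
  have hσbd : ∀ t, 1 ≤ t → t ≤ n → 1 ≤ σ t ∧ σ t ≤ n := fun t ht htn => (hσmem t ht htn).1
  have hτbd : ∀ j, 1 ≤ j → j ≤ n → 1 ≤ τ j ∧ τ j ≤ n := fun j hj hjn => (hτmem j hj hjn).1
  have hσmono : ∀ t s, 1 ≤ t → s ≤ n → t ≤ s → σ t ≤ σ s := by
    intro t s ht hs hts
    obtain ⟨⟨hs1, hs2⟩, hcs⟩ := hσmem s (le_trans ht hts) hs
    obtain ⟨⟨ht1, ht2⟩, hct⟩ := hσmem t ht (le_trans hts hs)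
    rcases le_total (σ s) (σ t) with h | h
    · exact hσle t (σ s) hs1 hs2 (cross ht hs hts hs1 ht2 h hct hcs).1
    · exact h
  have hτmono : ∀ j k, 1 ≤ j → k ≤ n → j ≤ k → τ j ≤ τ k := by
    intro j k hj hk hjk
    obtain ⟨⟨hk1, hk2⟩, hck⟩ := hτmem k (le_trans hj hjk) hk
    obtain ⟨⟨hj1, hj2⟩, hcj⟩ := hτmem j hj (le_trans hjk hk)
    rcases le_total (τ k) (τ j) with h | h
    · exact hτle j (τ k) hk1 hk2 (cross hk1 hj2 h hj hk hjk hck hcj).1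
    · exact h
  have hC11 : dlC ε₁ ε₂ f g 1 1 := by
    obtain ⟨j, ⟨hj1, hjn⟩, hcl⟩ := hex1 1 le_rfl hn
    have hj' : j = 1 := by
      have hx : |((1 : ℕ) : ℝ) - (j : ℝ)| ≤ ε₁ * min ((1 : ℕ) : ℝ) (j : ℝ) := hcl.1
      rw [Nat.cast_one] at hx
      have h1j : (1 : ℝ) ≤ (j : ℝ) := by exact_mod_cast hj1
      rw [min_eq_left h1j] at hx
      have habs := abs_le.mp hx
      have hj2 : (j : ℝ) < 2 := by
        have := habs.1
        nlinarith
      have : j < 2 := by exact_mod_cast hj2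
      omega
    subst hj'; exact hcl
  have hCnn : dlC ε₁ ε₂ f g n n := by
    obtain ⟨t', ⟨ht1, htn⟩, hcl1⟩ := hex1 n hn le_rfl
    obtain ⟨t'', ⟨hs1, hsn⟩, hcl2⟩ := hex2 n hn le_rfl
    constructor
    · show epsClose ε₁ ((n : ℕ) : ℝ) ((n : ℕ) : ℝ)
      unfold epsClose
      rw [sub_self, abs_zero, min_self]
      positivity
    · have hy1 : epsClose ε₂ (f n) (g t') := hcl1.2
      have hy2 : epsClose ε₂ (f t'') (g n) := hcl2.2
      rw [epsClose_iff hε₂0.le (hf0 n hn le_rfl) (hg0 t' ht1 htn)] at hy1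
      rw [epsClose_iff hε₂0.le (hf0 t'' hs1 hsn) (hg0 n hn le_rfl)] at hy2
      show epsClose ε₂ (f n) (g n)
      rw [epsClose_iff hε₂0.le (hf0 n hn le_rfl) (hg0 n hn le_rfl)]
      have hgn : g n ≤ g t' := hgm t' n ht1 htn le_rfl
      have hfn : f n ≤ f t'' := hfm t'' n hs1 hsn le_rfl
      exact ⟨by linarith [hy2.1], by linarith [hy1.2]⟩
  have hσ1 : σ 1 = 1 := le_antisymm (hσle 1 1 le_rfl hn hC11) (hσbd 1 le_rfl hn).1
  have hτ1 : τ 1 = 1 := le_antisymm (hτle 1 1 le_rfl hn hC11) (hτbd 1 le_rfl hn).1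
  have hστ : ∀ j, 1 ≤ j → j ≤ n → σ (τ j) ≤ j := by
    intro j hj hjn
    obtain ⟨⟨b1, b2⟩, hcτ⟩ := hτmem j hj hjn
    exact hσle (τ j) j hj hjn hcτ
  have hτσ : ∀ t, 1 ≤ t → t ≤ n → τ (σ t) ≤ t := by
    intro t ht htn
    obtain ⟨⟨a1, a2⟩, hcσ⟩ := hσmem t ht htn
    exact hτle (σ t) t ht htn hcσ
  have key : ∀ t j, 1 ≤ t → t ≤ n → 1 ≤ j → j ≤ n → σ t ≤ j → τ j ≤ t →
      dlC ε₁ ε₂ f g t j := by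
    intro t j ht htn hj hjn hσtj hτjt
    obtain ⟨⟨a1, a2⟩, hcσ⟩ := hσmem t ht htn
    obtain ⟨⟨b1, b2⟩, hcτ⟩ := hτmem j hj hjn
    exact (cross b1 htn hτjt a1 hjn hσtj hcτ hcσ).2
  -- the path
  have hpstep : ∀ k, 1 ≤ k →
      (dlStep n σ τ)^[(k + 1) - 1] (1, 1) = dlStep n σ τ ((dlStep n σ τ)^[k - 1] (1, 1)) := by
    intro k hk
    have h : (k + 1) - 1 = (k - 1) + 1 := by omega
    rw [h, Function.iterate_succ_apply']
  have hInv1 : dlInv n σ τ (1, 1) := ⟨le_rfl, hn, le_rfl, hn, le_of_eq hσ1, le_of_eq hτ1⟩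
  have hmain : ∀ i, 1 ≤ i → dlInv n σ τ ((dlStep n σ τ)^[i - 1] (1, 1)) ∧
      ((dlStep n σ τ)^[i - 1] (1, 1) = (n, n) ∨
        i + 1 ≤ ((dlStep n σ τ)^[i - 1] (1, 1)).1 + ((dlStep n σ τ)^[i - 1] (1, 1)).2) := by
    intro i
    induction i with
    | zero => intro h; exact absurd h (by omega)
    | succ k ih =>
      intro _
      rcases Nat.eq_zero_or_pos k with hk | hk
      · subst hk
        exact ⟨hInv1, Or.inr le_rfl⟩
      · obtain ⟨hinv, hsum⟩ := ih hk
        have hps := hpstep k hk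
        have hstep := dlStep_inv n σ τ hσbd hτbd hσmono hστ hτσ _ hinv
        rw [hps]
        constructor
        · exact hstep.1
        · by_cases hpk : ((dlStep n σ τ)^[k - 1] (1, 1)).1 = n ∧
              ((dlStep n σ τ)^[k - 1] (1, 1)).2 = n
          · left
            have hpkeq : (dlStep n σ τ)^[k - 1] (1, 1) = (n, n) := Prod.ext hpk.1 hpk.2
            rw [hpkeq]
            unfold dlStep
            simp
          · right
            have hs := hstep.2 hpk
            have hsum' : k + 1 ≤ ((dlStep n σ τ)^[k - 1] (1, 1)).1 +
                ((dlStep n σ τ)^[k - 1] (1, 1)).2 := by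
              rcases hsum with h | h
              · exact absurd ⟨congrArg Prod.fst h, congrArg Prod.snd h⟩ hpk
              · exact h
            omega
  have hm1 : 1 ≤ 2 * n - 1 := by omega
  have hend : (dlStep n σ τ)^[(2 * n - 1) - 1] (1, 1) = (n, n) := by
    obtain ⟨hinv, hsum⟩ := hmain (2 * n - 1) hm1
    rcases hsum with h | h
    · exact h
    · obtain ⟨i1, i2, i3, i4, _, _⟩ := hinv
      have e1 : ((dlStep n σ τ)^[(2 * n - 1) - 1] (1, 1)).1 = n := by omega
      have e2 : ((dlStep n σ τ)^[(2 * n - 1) - 1] (1, 1)).2 = n := by omega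
      exact Prod.ext e1 e2
  refine ⟨2 * n - 1, fun i => ((dlStep n σ τ)^[i - 1] (1, 1)).1,
    fun i => ((dlStep n σ τ)^[i - 1] (1, 1)).2, hm1, rfl, rfl, ?_, ?_, ?_, ?_⟩
  · dsimp only; rw [hend]
  · dsimp only; rw [hend]
  · intro i hi him
    dsimp only
    rw [hpstep i hi]
    exact dlStep_01 n σ τ _
  · intro i hi him
    dsimp only
    obtain ⟨j1, j2, j3, j4, j5, j6⟩ := (hmain i hi).1
    exact key _ _ j1 j2 j3 j4 j5 j6


theorem backward_dir (n : ℕ) (ε₁ ε₂ : ℝ) (f g : ℕ → ℝ)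
    (hc : couplingClose n ε₁ ε₂ f g) :
    (∀ t ∈ Finset.Icc 1 n, ∃ t' ∈ Finset.Icc 1 n,
        ptsClose ε₁ ε₂ ((t : ℝ), f t) ((t' : ℝ), g t')) ∧
    (∀ t ∈ Finset.Icc 1 n, ∃ t' ∈ Finset.Icc 1 n,
        ptsClose ε₁ ε₂ ((t : ℝ), g t) ((t' : ℝ), f t')) := by
  obtain ⟨m, a, b, hm, ha1, hb1, ham, hbm, hsteps, hclose⟩ := hc
  have hastep : ∀ i, 1 ≤ i → i < m → a (i + 1) = a i ∨ a (i + 1) = a i + 1 :=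
    fun i hi him => (hsteps i hi him).1
  have hbstep : ∀ i, 1 ≤ i → i < m → b (i + 1) = b i ∨ b (i + 1) = b i + 1 :=
    fun i hi him => (hsteps i hi him).2
  have habd : ∀ i, 1 ≤ i → i ≤ m → 1 ≤ a i ∧ a i ≤ n := by
    intro i hi him
    have h1 := walk_mono m a hastep i him 1 le_rfl hi
    have h2 := walk_mono m a hastep m le_rfl i hi him
    rw [ha1] at h1; rw [ham] at h2
    exact ⟨h1, h2⟩
  have hbbd : ∀ i, 1 ≤ i → i ≤ m → 1 ≤ b i ∧ b i ≤ n := by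
    intro i hi him
    have h1 := walk_mono m b hbstep i him 1 le_rfl hi
    have h2 := walk_mono m b hbstep m le_rfl i hi him
    rw [hb1] at h1; rw [hbm] at h2
    exact ⟨h1, h2⟩
  constructor
  · intro t htmem
    obtain ⟨h1t, htn⟩ := Finset.mem_Icc.mp htmem
    obtain ⟨i, hi1, him, hai⟩ := walk_surj m n a hm ha1 ham hastep t h1t htn
    refine ⟨b i, Finset.mem_Icc.mpr ⟨(hbbd i hi1 him).1, (hbbd i hi1 him).2⟩, ?_⟩
    have := hclose i hi1 him
    rw [hai] at this
    exact this
  · intro t htmem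
    obtain ⟨h1t, htn⟩ := Finset.mem_Icc.mp htmem
    obtain ⟨i, hi1, him, hbi⟩ := walk_surj m n b hm hb1 hbm hbstep t h1t htn
    refine ⟨a i, Finset.mem_Icc.mpr ⟨(habd i hi1 him).1, (habd i hi1 him).2⟩, ?_⟩
    have := hclose i hi1 him
    rw [hbi] at this
    exact ⟨epsClose_symm this.1, epsClose_symm this.2⟩

/-- Distance Lemma: for nonincreasing `f, g : {1,…,n} → ℝ≥0`,
the pointwise definition of `(ε₁,ε₂)`-closeness for the relative Fréchet
distance is equivalent to the existence of a coupling of relative length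
`(ε₁,ε₂)`. -/
theorem stmt11 (n : ℕ) (hn : 1 ≤ n) (ε₁ ε₂ : ℝ)
    (hε₁0 : 0 < ε₁) (hε₁1 : ε₁ < 1) (hε₂0 : 0 < ε₂) (hε₂1 : ε₂ < 1)
    (f g : ℕ → ℝ)
    (hfnonneg : ∀ i ∈ Finset.Icc 1 n, 0 ≤ f i)
    (hgnonneg : ∀ i ∈ Finset.Icc 1 n, 0 ≤ g i)
    (hfmono : ∀ i ∈ Finset.Icc 1 n, ∀ j ∈ Finset.Icc 1 n, i ≤ j → f j ≤ f i)
    (hgmono : ∀ i ∈ Finset.Icc 1 n, ∀ j ∈ Finset.Icc 1 n, i ≤ j → g j ≤ g i) :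
    ((∀ t ∈ Finset.Icc 1 n, ∃ t' ∈ Finset.Icc 1 n,
        ptsClose ε₁ ε₂ ((t : ℝ), f t) ((t' : ℝ), g t')) ∧
     (∀ t ∈ Finset.Icc 1 n, ∃ t' ∈ Finset.Icc 1 n,
        ptsClose ε₁ ε₂ ((t : ℝ), g t) ((t' : ℝ), f t'))) ↔
    couplingClose n ε₁ ε₂ f g := by
  constructor
  · rintro ⟨h1, h2⟩
    exact forward_dir n hn ε₁ ε₂ hε₁0 hε₁1 hε₂0 f g hfnonneg hgnonneg hfmono hgmono h1 h2
  · intro hc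
    exact backward_dir n ε₁ ε₂ f g hc
end

section
/- Let 0 < ε₁ ≤ 1 and 0 < ε₂ ≤ 1, and let f : {1,…,n} → ℝ be nonincreasing with strictly positive values. Suppose there exists a partition of {1,…,n} into consecutive intervals [ℓ_1,r_1], [ℓ_2,r_2], … (with ℓ_1 = 1 and ℓ_{j+1} = r_j + 1) such that for every j: r_j ≥ ⌊(1+ε₁)·ℓ_j⌋ and f(r_j) ≥ f(ℓ_j)/(1+3ε₂). Then f is (ε₁, 4ε₂)-half-stable. -/
/-- `f` on `{1,…,n}` is `(ε₁, ε₂)`-half-stable. -/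
def halfStable (n : ℕ) (ε₁ ε₂ : ℝ) (f : ℕ → ℝ) : Prop :=
  ∀ t ∈ Finset.Icc 1 n, ∃ x y : ℝ, 0 < x ∧ 0 < y ∧
    x ≤ (t : ℝ) ∧ (t : ℝ) ≤ x * (1 + ε₁) ∧
    ∀ z ∈ Finset.Icc 1 n, x ≤ (z : ℝ) → (z : ℝ) ≤ x * (1 + ε₁) →
      y ≤ f z ∧ f z ≤ y * (1 + ε₂)

/-- if `f : {1,…,n} → ℝ` is nonincreasing with positive values
and `{1,…,n}` can be partitioned into consecutive intervals `[ℓ_j, r_j]` with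
`r_j ≥ ⌊(1+ε₁)·ℓ_j⌋` and `f (r_j) ≥ f (ℓ_j) / (1 + 3ε₂)` for every `j`, then
`f` is `(ε₁, 4ε₂)`-half-stable. -/
theorem stmt13 (n : ℕ) (hn : 1 ≤ n) (ε₁ ε₂ : ℝ)
    (hε₁0 : 0 < ε₁) (hε₁1 : ε₁ ≤ 1) (hε₂0 : 0 < ε₂) (hε₂1 : ε₂ ≤ 1)
    (f : ℕ → ℝ)
    (hfpos : ∀ i ∈ Finset.Icc 1 n, 0 < f i)
    (hfmono : ∀ i ∈ Finset.Icc 1 n, ∀ j ∈ Finset.Icc 1 n, i ≤ j → f j ≤ f i)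
    (hpart : ∃ (m : ℕ) (ℓ r : ℕ → ℕ), 1 ≤ m ∧ ℓ 1 = 1 ∧ r m = n ∧
      (∀ j : ℕ, 1 ≤ j → j ≤ m → ℓ j ≤ r j) ∧
      (∀ j : ℕ, 1 ≤ j → j < m → ℓ (j + 1) = r j + 1) ∧
      (∀ j : ℕ, 1 ≤ j → j ≤ m →
        (⌊(1 + ε₁) * (ℓ j : ℝ)⌋₊ ≤ r j) ∧
        f (ℓ j) / (1 + 3 * ε₂) ≤ f (r j))) :
    halfStable n ε₁ (4 * ε₂) f := by
  obtain ⟨m, ℓ, r, hm, hℓ1, hrm, hlr, hcons, hprop⟩ := hpart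
  have hrn : ∀ d j, 1 ≤ j → j + d = m → r j ≤ n := by
    intro d
    induction d with
    | zero =>
      intro j hj hjm
      have : j = m := by omega
      rw [this, hrm]
    | succ d ih =>
      intro j hj hjm
      have h1 : ℓ (j + 1) = r j + 1 := hcons j hj (by omega)
      have h2 : ℓ (j + 1) ≤ r (j + 1) := hlr (j + 1) (by omega) (by omega)
      have h3 := ih (j + 1) (by omega) (by omega)
      omega
  intro t ht
  simp only [Finset.mem_Icc] at ht
  set S := (Finset.Icc 1 m).filter (fun j => ℓ j ≤ t) with hS
  have hSne : S.Nonempty :=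
    ⟨1, by simp [hS, Finset.mem_filter, Finset.mem_Icc, hm, hℓ1, ht.1]⟩
  set j := S.max' hSne with hjdef
  have hjS : j ∈ S := S.max'_mem hSne
  simp only [hS, Finset.mem_filter, Finset.mem_Icc] at hjS
  obtain ⟨⟨hj1, hjm⟩, hℓt⟩ := hjS
  have hrjn : r j ≤ n := hrn (m - j) j hj1 (by omega)
  have htr : t ≤ r j := by
    rcases eq_or_lt_of_le hjm with h | h
    · rw [h, hrm]; exact ht.2
    · by_contra hc
      push_neg at hc
      have h1 : ℓ (j + 1) = r j + 1 := hcons j hj1 h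
      have h2 : j + 1 ∈ S := by
        simp only [hS, Finset.mem_filter, Finset.mem_Icc]
        omega
      have := S.le_max' _ h2
      omega
  have hℓ1j : 1 ≤ ℓ j := by
    rcases Nat.lt_or_ge j 2 with h | h
    · have hj' : j = 1 := by omega
      rw [hj', hℓ1]
    · have h1 : ℓ (j - 1 + 1) = r (j - 1) + 1 := hcons (j - 1) (by omega) (by omega)
      have h2 : j - 1 + 1 = j := by omega
      rw [h2] at h1
      omega
  have hℓr : ℓ j ≤ r j := hlr j hj1 hjm
  obtain ⟨hfloor, hfr⟩ := hprop j hj1 hjm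
  have hℓmem : ℓ j ∈ Finset.Icc 1 n := Finset.mem_Icc.mpr ⟨hℓ1j, le_trans hℓr hrjn⟩
  have hrmem : r j ∈ Finset.Icc 1 n := Finset.mem_Icc.mpr ⟨le_trans hℓ1j hℓr, hrjn⟩
  have hε : (0 : ℝ) < 1 + ε₁ := by linarith
  have h3ε : (0 : ℝ) < 1 + 3 * ε₂ := by linarith
  have hLpos : (0 : ℝ) < (ℓ j : ℝ) := by exact_mod_cast hℓ1j
  refine ⟨max (ℓ j : ℝ) ((t : ℝ) / (1 + ε₁)), f (r j),
    lt_max_of_lt_left hLpos, hfpos _ hrmem, ?_, ?_, ?_⟩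
  · exact max_le (by exact_mod_cast hℓt)
      (div_le_self (by positivity) (by linarith))
  · have h1 : (t : ℝ) / (1 + ε₁) ≤ max (ℓ j : ℝ) ((t : ℝ) / (1 + ε₁)) :=
      le_max_right _ _
    calc (t : ℝ) = (t : ℝ) / (1 + ε₁) * (1 + ε₁) := by field_simp
    _ ≤ _ := by nlinarith
  · intro z hz hz1 hz2
    have hℓz : ℓ j ≤ z := by
      have : (ℓ j : ℝ) ≤ (z : ℝ) := le_trans (le_max_left _ _) hz1
      exact_mod_cast this
    have hzr : z ≤ r j := by
      have hmul : max (ℓ j : ℝ) ((t : ℝ) / (1 + ε₁)) * (1 + ε₁) =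
          max ((ℓ j : ℝ) * (1 + ε₁)) ((t : ℝ)) := by
        rw [max_mul_of_nonneg _ _ hε.le, div_mul_cancel₀ _ (ne_of_gt hε)]
      rw [hmul] at hz2
      rcases le_max_iff.mp hz2 with h | h
      · have : z ≤ ⌊(1 + ε₁) * (ℓ j : ℝ)⌋₊ := Nat.le_floor (by linarith [h])
        omega
      · have : z ≤ t := by exact_mod_cast h
        omega
    have hfz1 : f (r j) ≤ f z := hfmono z hz (r j) hrmem hzr
    have hfz2 : f z ≤ f (ℓ j) := hfmono (ℓ j) hℓmem z hz hℓz
    have hfℓ : f (ℓ j) ≤ f (r j) * (1 + 3 * ε₂) := (div_le_iff₀ h3ε).mp hfr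
    have hfrpos : 0 < f (r j) := hfpos _ hrmem
    refine ⟨hfz1, ?_⟩
    nlinarith
end

section
/- Let γ₂ > γ₁ > 1 be reals and let g : {1,…,n} → ℝ≥0 be any function (not necessarily monotone) satisfying g(⌈γ₁·t⌉) ≤ g(t)/γ₂ for every t ∈ {1,…,n} with γ₁·t ≤ n. Define the nonincreasing envelope ḡ(t) = min_{1 ≤ y ≤ t} g(y). Then ḡ(⌈γ₁·t⌉) ≤ ḡ(t)/γ₂ for every t with γ₁·t ≤ n; that is, ḡ is a nonincreasing (γ₁,γ₂)-decreasing function. -/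
/-- if `g : {1,…,n} → ℝ≥0` (not necessarily monotone) satisfies
`g ⌈γ₁·t⌉ ≤ g t / γ₂` whenever `γ₁·t ≤ n`, then its nonincreasing envelope
`ḡ t = min_{1 ≤ y ≤ t} g y` is nonincreasing and `(γ₁, γ₂)`-decreasing. -/
theorem stmt14 (n : ℕ) (γ₁ γ₂ : ℝ) (hγ1 : 1 < γ₁) (hγ12 : γ₁ < γ₂)
    (g : ℕ → ℝ)
    (hgnonneg : ∀ i ∈ Finset.Icc 1 n, 0 ≤ g i)
    (hgdec : ∀ t ∈ Finset.Icc 1 n, γ₁ * (t : ℝ) ≤ (n : ℝ) →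
      g ⌈γ₁ * (t : ℝ)⌉₊ ≤ g t / γ₂)
    (gbar : ℕ → ℝ)
    (hgbar : ∀ t : ℕ, gbar t = sInf {v : ℝ | ∃ y : ℕ, 1 ≤ y ∧ y ≤ t ∧ g y = v}) :
    (∀ i ∈ Finset.Icc 1 n, ∀ j ∈ Finset.Icc 1 n, i ≤ j → gbar j ≤ gbar i) ∧
    (∀ t ∈ Finset.Icc 1 n, γ₁ * (t : ℝ) ≤ (n : ℝ) →
      gbar ⌈γ₁ * (t : ℝ)⌉₊ ≤ gbar t / γ₂) := by
  -- Describe the set as the image of a finite set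
  have hset : ∀ t : ℕ, {v : ℝ | ∃ y : ℕ, 1 ≤ y ∧ y ≤ t ∧ g y = v} =
      ↑((Finset.Icc 1 t).image g) := by
    intro t
    ext v
    simp [Finset.mem_image, Finset.mem_Icc, and_assoc]
  have hfin : ∀ t : ℕ, {v : ℝ | ∃ y : ℕ, 1 ≤ y ∧ y ≤ t ∧ g y = v}.Finite := by
    intro t; rw [hset t]; exact Finset.finite_toSet _
  have hmem : ∀ t : ℕ, ∀ y : ℕ, 1 ≤ y → y ≤ t →
      g y ∈ {v : ℝ | ∃ y : ℕ, 1 ≤ y ∧ y ≤ t ∧ g y = v} := by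
    intro t y hy1 hy2; exact ⟨y, hy1, hy2, rfl⟩
  have hle : ∀ t : ℕ, ∀ y : ℕ, 1 ≤ y → y ≤ t → gbar t ≤ g y := by
    intro t y hy1 hy2
    rw [hgbar t]
    exact csInf_le (hfin t).bddBelow (hmem t y hy1 hy2)
  have hattain : ∀ t : ℕ, 1 ≤ t → ∃ y : ℕ, 1 ≤ y ∧ y ≤ t ∧ gbar t = g y := by
    intro t ht
    have hne : {v : ℝ | ∃ y : ℕ, 1 ≤ y ∧ y ≤ t ∧ g y = v}.Nonempty :=
      ⟨g t, hmem t t ht le_rfl⟩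
    obtain ⟨y, hy1, hy2, hyv⟩ := hne.csInf_mem (hfin t)
    exact ⟨y, hy1, hy2, by rw [hgbar t, hyv]⟩
  constructor
  · intro i hi j hj hij
    simp only [Finset.mem_Icc] at hi hj
    obtain ⟨y, hy1, hy2, hyeq⟩ := hattain i hi.1
    rw [hyeq]
    exact hle j y hy1 (hy2.trans hij)
  · intro t ht hγt
    simp only [Finset.mem_Icc] at ht
    obtain ⟨y, hy1, hy2, hyeq⟩ := hattain t ht.1
    have hyn : y ≤ n := hy2.trans ht.2
    have hγy : γ₁ * (y : ℝ) ≤ (n : ℝ) := by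
      calc γ₁ * (y : ℝ) ≤ γ₁ * (t : ℝ) := by
            apply mul_le_mul_of_nonneg_left (by exact_mod_cast hy2) (by linarith)
        _ ≤ (n : ℝ) := hγt
    have hg := hgdec y (Finset.mem_Icc.mpr ⟨hy1, hyn⟩) hγy
    have hceil1 : 1 ≤ ⌈γ₁ * (y : ℝ)⌉₊ := by
      have : (1 : ℝ) ≤ γ₁ * (y : ℝ) := by
        have : (1 : ℝ) ≤ (y : ℝ) := by exact_mod_cast hy1
        nlinarith
      exact Nat.one_le_ceil_iff.mpr (by linarith)
    have hceilmono : ⌈γ₁ * (y : ℝ)⌉₊ ≤ ⌈γ₁ * (t : ℝ)⌉₊ := by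
      apply Nat.ceil_le_ceil
      apply mul_le_mul_of_nonneg_left (by exact_mod_cast hy2) (by linarith)
    calc gbar ⌈γ₁ * (t : ℝ)⌉₊ ≤ g ⌈γ₁ * (y : ℝ)⌉₊ :=
          hle _ _ hceil1 hceilmono
      _ ≤ g y / γ₂ := hg
      _ = gbar t / γ₂ := by rw [hyeq]
end

section
/- (Concentration of the rank of a sampled element.) Let n ≥ 3, let 0 < δ < ln n, let 0 < β < 1, and let z be a real with 1 ≤ z(1−β) and z(1+β) ≤ n. Set L = ln((ln n)/δ) and a = β²·z/(6L), and assume a ≥ 1. Let X₁,…,X_n be independent Bernoulli random variables each equal to 1 with probability 1/a. Let S_m = Σ_{j=1}^m X_j and let R = min{m ≤ n : S_m ≥ z/a} (with R = +∞ if S_n < z/a). Then with probability at least 1 − 4δ/ln n one has z(1−β) < R ≤ z(1+β); equivalently, with probability at least 1 − 4δ/ln n both S_{⌊z(1−β)⌋} < z/a and S_{⌈z(1+β)⌉} ≥ z/a hold. -/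
/-!
Both tails are Chernoff bounds. The partial sum `S m` of `m` independent Bernoulli(`p`) variables
has moment generating function `(1 + p (eᵗ - 1))ᵐ ≤ exp (p (eᵗ - 1) m)`. Taking `t = β` at
`m = ⌊z(1-β)⌋` and `t = -β` at `m = ⌈z(1+β)⌉`, the two elementary inequalities
`(1-β)(e^β - 1) - β ≤ -β²/6` and `(1+β)(e^{-β} - 1) + β ≤ -β²/6` bound each tail by
`exp (-(z/a) β²/6) = exp (-L) = δ / ln n`, and a union bound finishes the proof.
-/

open MeasureTheory ProbabilityTheory Real Finset

lemma one_sub_mul_exp_sub_one_sub_le {β : ℝ} (hβ0 : 0 ≤ β) (hβ1 : β ≤ 1) :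
    (1 - β) * (exp β - 1) - β ≤ -β ^ 2 / 6 := by
  have hexp : exp β ≤ 1 + β + β ^ 2 * 3 / 4 := by
    have h := exp_bound' hβ0 hβ1 (n := 2) (by norm_num)
    norm_num [Finset.sum_range_succ] at h
    linarith
  nlinarith [mul_le_mul_of_nonneg_left hexp (by linarith : 0 ≤ 1 - β), pow_nonneg hβ0 3]

lemma one_add_mul_exp_neg_sub_one_add_le {β : ℝ} (hβ0 : 0 ≤ β) (hβ1 : β ≤ 1) :
    (1 + β) * (exp (-β) - 1) + β ≤ -β ^ 2 / 6 := by
  set Q : ℝ := 1 + β + β ^ 2 / 2 + β ^ 3 / 6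
  have hQ : 0 < Q := by positivity
  have hQ_le : Q ≤ exp β := by
    have h := sum_le_exp_of_nonneg hβ0 4
    norm_num [Finset.sum_range_succ, Nat.factorial] at h
    exact h
  have hexp : exp (-β) ≤ 1 / Q := by
    rw [exp_neg, one_div]
    exact inv_anti₀ hQ hQ_le
  have key : (1 + β) * (1 / Q - 1) + β + β ^ 2 / 6
      = (-(1 / 3) * β ^ 2 + β ^ 4 / 12 + β ^ 5 / 36) / Q := by
    field_simp
    ring
  have hnum : -(1 / 3) * β ^ 2 + β ^ 4 / 12 + β ^ 5 / 36 ≤ 0 := by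
    nlinarith [sq_nonneg β, pow_nonneg hβ0 3, mul_le_mul_of_nonneg_left hβ1 (pow_nonneg hβ0 4)]
  have : (1 + β) * (1 / Q - 1) + β + β ^ 2 / 6 ≤ 0 := by
    rw [key]
    exact div_nonpos_of_nonpos_of_nonneg hnum hQ.le
  nlinarith [mul_le_mul_of_nonneg_left hexp (by linarith : 0 ≤ 1 + β)]

lemma one_add_pow_le_exp_mul {x : ℝ} (hx : 0 ≤ 1 + x) (m : ℕ) : (1 + x) ^ m ≤ exp (x * m) := by
  rw [mul_comm, exp_nat_mul]
  exact pow_le_pow_left₀ hx (by linarith [add_one_le_exp x]) m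

lemma one_sub_add_le_measureReal_of_compl_subset_union {Ω : Type*} [MeasurableSpace Ω]
    {P : Measure Ω} [IsProbabilityMeasure P] {s A B : Set Ω} {εA εB : ℝ}
    (hA : P.real A ≤ εA) (hB : P.real B ≤ εB) (h : sᶜ ⊆ A ∪ B) :
    1 - (εA + εB) ≤ P.real s := by
  have hcover : Set.univ ⊆ s ∪ (A ∪ B) := fun ω _ => (em (ω ∈ s)).imp id (fun hω => h hω)
  have := (measureReal_mono (μ := P) hcover).trans (measureReal_union_le s (A ∪ B))
  rw [probReal_univ] at this
  linarith [measureReal_union_le (μ := P) A B]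

lemma sum_Icc_cast_mem_Icc {Ω : Type*} {X : ℕ → Ω → ℕ}
    (h01 : ∀ j, ∀ ω, X j ω = 0 ∨ X j ω = 1) (m : ℕ) (ω : Ω) :
    ∑ j ∈ Icc 1 m, (X j ω : ℝ) ∈ Set.Icc 0 (m : ℝ) := by
  refine ⟨sum_nonneg fun j _ => by positivity, ?_⟩
  calc ∑ j ∈ Icc 1 m, (X j ω : ℝ) ≤ ∑ _j ∈ Icc 1 m, (1 : ℝ) :=
        sum_le_sum fun j _ => by rcases h01 j ω with h | h <;> simp [h]
    _ = m := by simp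

section BernoulliSum

variable {Ω : Type*} [MeasurableSpace Ω] {P : Measure Ω} [IsProbabilityMeasure P]
  {X : ℕ → Ω → ℕ} {p : ℝ}

lemma integrable_exp_mul_sum_Icc (hmeas : ∀ j, Measurable (X j))
    (h01 : ∀ j, ∀ ω, X j ω = 0 ∨ X j ω = 1) (m : ℕ) (t : ℝ) :
    Integrable (fun ω => exp (t * ∑ j ∈ Icc 1 m, (X j ω : ℝ))) P := by
  refine Integrable.of_mem_Icc 0 (exp (|t| * m)) (by fun_prop) (ae_of_all _ fun ω => ?_)
  obtain ⟨h0, hm⟩ := sum_Icc_cast_mem_Icc h01 m ω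
  refine ⟨(exp_pos _).le, exp_le_exp.2 ?_⟩
  calc t * ∑ j ∈ Icc 1 m, (X j ω : ℝ) ≤ |t| * ∑ j ∈ Icc 1 m, (X j ω : ℝ) :=
        mul_le_mul_of_nonneg_right (le_abs_self t) h0
    _ ≤ |t| * m := mul_le_mul_of_nonneg_left hm (abs_nonneg t)

lemma mgf_cast_of_bernoulli {Y : Ω → ℕ} (hY : Measurable Y) (h01 : ∀ ω, Y ω = 0 ∨ Y ω = 1)
    (hp : 0 ≤ p) (hBer : P {ω | Y ω = 1} = ENNReal.ofReal p) (t : ℝ) :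
    mgf (fun ω => (Y ω : ℝ)) P t = 1 + p * (exp t - 1) := by
  have hs : MeasurableSet {ω | Y ω = 1} := hY (measurableSet_singleton 1)
  have haffine : (fun ω => exp (t * Y ω)) =
      fun ω => 1 + (exp t - 1) * Set.indicator {ω | Y ω = 1} (fun _ => (1 : ℝ)) ω := by
    funext ω
    rcases h01 ω with h | h <;> simp [h]
  rw [mgf, haffine, integral_add (integrable_const 1)
    (((integrable_const 1).indicator hs).const_mul _), integral_const, integral_const_mul,
    integral_indicator_const 1 hs]
  simp [Measure.real, hBer, hp]
  ring

lemma mgf_sum_Icc_of_bernoulli (hmeas : ∀ j, Measurable (X j))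
    (h01 : ∀ j, ∀ ω, X j ω = 0 ∨ X j ω = 1) (hp : 0 ≤ p)
    (hBer : ∀ j, P {ω | X j ω = 1} = ENNReal.ofReal p) (hindep : iIndepFun X P)
    (m : ℕ) (t : ℝ) :
    mgf (fun ω => ∑ j ∈ Icc 1 m, (X j ω : ℝ)) P t = (1 + p * (exp t - 1)) ^ m := by
  have hindep_cast : iIndepFun (fun j ω => (X j ω : ℝ)) P :=
    hindep.comp (fun _ => ((↑) : ℕ → ℝ)) (fun _ => measurable_from_top)
  have hsum : (fun ω => ∑ j ∈ Icc 1 m, (X j ω : ℝ)) = ∑ j ∈ Icc 1 m, fun ω => (X j ω : ℝ) := by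
    funext ω
    simp
  rw [hsum, hindep_cast.mgf_sum (fun j => measurable_from_top.comp (hmeas j))]
  simp [mgf_cast_of_bernoulli (hmeas _) (h01 _) hp (hBer _) t]

lemma measureReal_ge_le_exp_of_bernoulli (hmeas : ∀ j, Measurable (X j))
    (h01 : ∀ j, ∀ ω, X j ω = 0 ∨ X j ω = 1) (hp : 0 ≤ p)
    (hBer : ∀ j, P {ω | X j ω = 1} = ENNReal.ofReal p) (hindep : iIndepFun X P)
    (m : ℕ) {t : ℝ} (ht : 0 ≤ t) (ε : ℝ) :
    P.real {ω | ε ≤ ∑ j ∈ Icc 1 m, (X j ω : ℝ)} ≤ exp (-t * ε + p * (exp t - 1) * m) := by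
  have h := measure_ge_le_exp_mul_mgf ε ht (integrable_exp_mul_sum_Icc (P := P) hmeas h01 m t)
  rw [mgf_sum_Icc_of_bernoulli hmeas h01 hp hBer hindep] at h
  rw [exp_add]
  refine h.trans (mul_le_mul_of_nonneg_left (one_add_pow_le_exp_mul ?_ m) (exp_pos _).le)
  nlinarith [one_le_exp ht]

lemma measureReal_le_le_exp_of_bernoulli (hmeas : ∀ j, Measurable (X j))
    (h01 : ∀ j, ∀ ω, X j ω = 0 ∨ X j ω = 1) (hp : 0 ≤ p) (hp1 : p ≤ 1)
    (hBer : ∀ j, P {ω | X j ω = 1} = ENNReal.ofReal p) (hindep : iIndepFun X P)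
    (m : ℕ) {t : ℝ} (ht : t ≤ 0) (ε : ℝ) :
    P.real {ω | ∑ j ∈ Icc 1 m, (X j ω : ℝ) ≤ ε} ≤ exp (-t * ε + p * (exp t - 1) * m) := by
  have h := measure_le_le_exp_mul_mgf ε ht (integrable_exp_mul_sum_Icc (P := P) hmeas h01 m t)
  rw [mgf_sum_Icc_of_bernoulli hmeas h01 hp hBer hindep] at h
  rw [exp_add]
  refine h.trans (mul_le_mul_of_nonneg_left (one_add_pow_le_exp_mul ?_ m) (exp_pos _).le)
  nlinarith [exp_pos t]

lemma measureReal_ge_le_of_mean_le (hmeas : ∀ j, Measurable (X j))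
    (h01 : ∀ j, ∀ ω, X j ω = 0 ∨ X j ω = 1) (hp : 0 ≤ p)
    (hBer : ∀ j, P {ω | X j ω = 1} = ENNReal.ofReal p) (hindep : iIndepFun X P)
    {m : ℕ} {β μ : ℝ} (hβ0 : 0 ≤ β) (hβ1 : β ≤ 1) (hμ : 0 ≤ μ) (hm : p * m ≤ (1 - β) * μ) :
    P.real {ω | μ ≤ ∑ j ∈ Icc 1 m, (X j ω : ℝ)} ≤ exp (-(μ * β ^ 2 / 6)) := by
  refine (measureReal_ge_le_exp_of_bernoulli hmeas h01 hp hBer hindep m hβ0 μ).trans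
    (exp_le_exp.2 ?_)
  have hexp : 0 ≤ exp β - 1 := by linarith [one_le_exp hβ0]
  nlinarith [mul_le_mul_of_nonneg_left hm hexp,
    mul_le_mul_of_nonneg_left (one_sub_mul_exp_sub_one_sub_le hβ0 hβ1) hμ]

lemma measureReal_le_le_of_le_mean (hmeas : ∀ j, Measurable (X j))
    (h01 : ∀ j, ∀ ω, X j ω = 0 ∨ X j ω = 1) (hp : 0 ≤ p) (hp1 : p ≤ 1)
    (hBer : ∀ j, P {ω | X j ω = 1} = ENNReal.ofReal p) (hindep : iIndepFun X P)
    {m : ℕ} {β μ : ℝ} (hβ0 : 0 ≤ β) (hβ1 : β ≤ 1) (hμ : 0 ≤ μ) (hm : (1 + β) * μ ≤ p * m) :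
    P.real {ω | ∑ j ∈ Icc 1 m, (X j ω : ℝ) ≤ μ} ≤ exp (-(μ * β ^ 2 / 6)) := by
  refine (measureReal_le_le_exp_of_bernoulli hmeas h01 hp hp1 hBer hindep m
    (neg_nonpos.2 hβ0) μ).trans (exp_le_exp.2 ?_)
  have hexp : exp (-β) - 1 ≤ 0 := by linarith [exp_le_one_iff.2 (neg_nonpos.2 hβ0)]
  nlinarith [mul_le_mul_of_nonpos_left hm hexp,
    mul_le_mul_of_nonneg_left (one_add_mul_exp_neg_sub_one_add_le hβ0 hβ1) hμ]

lemma one_sub_two_mul_exp_le_measureReal_floor_ceil {a : ℝ} (ha1 : 1 ≤ a)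
    (hmeas : ∀ j, Measurable (X j)) (h01 : ∀ j, ∀ ω, X j ω = 0 ∨ X j ω = 1)
    (hBer : ∀ j, P {ω | X j ω = 1} = ENNReal.ofReal (1 / a)) (hindep : iIndepFun X P)
    {β z : ℝ} (hβ0 : 0 ≤ β) (hβ1 : β ≤ 1) (hz : 0 ≤ z) :
    1 - 2 * exp (-(z / a * β ^ 2 / 6)) ≤
      P.real {ω | ∑ j ∈ Icc 1 ⌊z * (1 - β)⌋₊, (X j ω : ℝ) < z / a ∧
        z / a ≤ ∑ j ∈ Icc 1 ⌈z * (1 + β)⌉₊, (X j ω : ℝ)} := by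
  have ha0 : 0 < a := one_pos.trans_le ha1
  have hp : 0 ≤ 1 / a := by positivity
  have hp1 : 1 / a ≤ 1 := (div_le_one ha0).2 ha1
  have hμ : 0 ≤ z / a := by positivity
  have hmean_upper : 1 / a * ⌊z * (1 - β)⌋₊ ≤ (1 - β) * (z / a) := by
    calc 1 / a * ⌊z * (1 - β)⌋₊ ≤ 1 / a * (z * (1 - β)) := by
          gcongr
          exact Nat.floor_le (mul_nonneg hz (by linarith))
      _ = (1 - β) * (z / a) := by ring
  have hmean_lower : (1 + β) * (z / a) ≤ 1 / a * ⌈z * (1 + β)⌉₊ := by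
    calc (1 + β) * (z / a) = 1 / a * (z * (1 + β)) := by ring
      _ ≤ 1 / a * ⌈z * (1 + β)⌉₊ := by
          gcongr
          exact Nat.le_ceil _
  refine le_of_eq_of_le (by ring) (one_sub_add_le_measureReal_of_compl_subset_union
    (measureReal_ge_le_of_mean_le hmeas h01 hp hBer hindep hβ0 hβ1 hμ hmean_upper)
    (measureReal_le_le_of_le_mean hmeas h01 hp hp1 hBer hindep hβ0 hβ1 hμ hmean_lower)
    fun ω hω => ?_)
  simp only [Set.mem_compl_iff, Set.mem_ofPred_eq, not_and_or, not_lt, not_le] at hω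
  exact hω.imp id le_of_lt

end BernoulliSum

theorem stmt17_general {Ω : Type*} [MeasurableSpace Ω] (P : Measure Ω)
    [IsProbabilityMeasure P]
    (n : ℕ) (δ β z L a : ℝ)
    (hδ0 : 0 < δ) (hδ1 : δ < Real.log n)
    (hβ0 : 0 < β) (hβ1 : β < 1)
    (hz1 : 1 ≤ z * (1 - β))
    (hL : L = Real.log (Real.log n / δ))
    (ha : a = β ^ 2 * z / (6 * L)) (ha1 : 1 ≤ a)
    (X : ℕ → Ω → ℕ)
    (hmeas : ∀ j, Measurable (X j))
    (h01 : ∀ j, ∀ ω, X j ω = 0 ∨ X j ω = 1)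
    (hBer : ∀ j, P {ω | X j ω = 1} = ENNReal.ofReal (1 / a))
    (hindep : iIndepFun X P) :
    ENNReal.ofReal (1 - 4 * δ / Real.log n) ≤
      P {ω | (∑ j ∈ Finset.Icc 1 ⌊z * (1 - β)⌋₊, (X j ω : ℝ)) < z / a ∧
             z / a ≤ ∑ j ∈ Finset.Icc 1 ⌈z * (1 + β)⌉₊, (X j ω : ℝ)} := by
  have hlog : 0 < log n := hδ0.trans hδ1
  have hz : 0 < z := by nlinarith
  have htail : exp (-(z / a * β ^ 2 / 6)) = δ / log n := by
    have hL0 : L ≠ 0 := by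
      rintro rfl
      norm_num [ha] at ha1
    have : z / a * β ^ 2 / 6 = L := by
      rw [ha]
      field_simp
    rw [this, hL, exp_neg, exp_log (by positivity), inv_div]
  have hconc := one_sub_two_mul_exp_le_measureReal_floor_ceil ha1 hmeas h01 hBer hindep
    hβ0.le hβ1.le hz.le
  rw [htail] at hconc
  rw [← ofReal_measureReal]
  refine ENNReal.ofReal_le_ofReal (le_trans ?_ hconc)
  have : 0 ≤ δ / log n := by positivity
  rw [mul_div_assoc]
  linarith

/-- concentration of the rank of a sampled element: let `n ≥ 3`,
`0 < δ < ln n`, `0 < β < 1`, `1 ≤ z(1-β)`, `z(1+β) ≤ n`, `L = ln((ln n)/δ)`,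
`a = β²·z/(6L) ≥ 1`. If `X 1, …, X n` are independent `{0,1}`-valued random
variables, each equal to `1` with probability `1/a`, and `S m = ∑_{j=1}^m X j`,
then with probability at least `1 - 4δ/ln n`, both `S ⌊z(1-β)⌋ < z/a` and
`S ⌈z(1+β)⌉ ≥ z/a` hold (i.e. the rank `R` of the `⌈z/a⌉`-th kept element
satisfies `z(1-β) < R ≤ z(1+β)`). -/
theorem stmt17 {Ω : Type*} [MeasurableSpace Ω] (P : Measure Ω)
    [IsProbabilityMeasure P]
    (n : ℕ) (δ β z L a : ℝ)
    (hn : 3 ≤ n) (hδ0 : 0 < δ) (hδ1 : δ < Real.log n)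
    (hβ0 : 0 < β) (hβ1 : β < 1)
    (hz1 : 1 ≤ z * (1 - β)) (hz2 : z * (1 + β) ≤ (n : ℝ))
    (hL : L = Real.log (Real.log n / δ))
    (ha : a = β ^ 2 * z / (6 * L)) (ha1 : 1 ≤ a)
    (X : ℕ → Ω → ℕ)
    (hmeas : ∀ j, Measurable (X j))
    (h01 : ∀ j, ∀ ω, X j ω = 0 ∨ X j ω = 1)
    (hBer : ∀ j, P {ω | X j ω = 1} = ENNReal.ofReal (1 / a))
    (hindep : iIndepFun X P) :
    ENNReal.ofReal (1 - 4 * δ / Real.log n) ≤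
      P {ω | (∑ j ∈ Finset.Icc 1 ⌊z * (1 - β)⌋₊, (X j ω : ℝ)) < z / a ∧
             z / a ≤ ∑ j ∈ Finset.Icc 1 ⌈z * (1 + β)⌉₊, (X j ω : ℝ)} :=
  stmt17_general P n δ β z L a hδ0 hδ1 hβ0 hβ1 hz1 hL ha ha1 X hmeas h01 hBer hindep
end
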